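/- arXiv:math/0002152 — 2 statements merged into one kernel-verified Lean document; each statement's English description precedes it below -/
import Mathlib

section
/- Let k be a Calderón–Zygmund kernel and ρ > 1. Suppose there is a constant A such that for every cube Q, every function a ∈ L∞(μ) supported on Q, and every ε > 0: ∫_Q |T_ε a| dμ ≤ A·‖a‖_{L∞(μ)}·μ(ρQ). Then there is a constant C such that for every atomic block b and every ε > 0: ‖T_ε b‖_{L¹(μ)} ≤ C·|b|_{H^{1,∞}_atb(μ)}; consequently the operators T_ε are uniformly bounded from H^{1,∞}_atb(μ) into L¹(μ). -/
/-!
Common definitions for formalizing Tolsa, "BMO, H¹, and Calderón–Zygmund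
operators for non doubling measures".
-/

open MeasureTheory Metric Set Function
open scoped Classical
open scoped ENNReal NNReal BigOperators

noncomputable section

/-- `ℝ^d` with the Euclidean metric. -/
abbrev Euc (d : ℕ) := EuclideanSpace ℝ (Fin d)

variable {d : ℕ}

/-- The support of a measure: points all of whose balls have positive measure. -/
def measSupp (μ : MeasureTheory.Measure (Euc d)) : Set (Euc d) :=
  {x | ∀ r : ℝ, 0 < r → 0 < μ (Metric.ball x r)}

/-- The growth condition `μ(B(x,r)) ≤ C₀ rⁿ`. -/
def GrowthBound (μ : MeasureTheory.Measure (Euc d)) (n : ℕ) (C₀ : ℝ) : Prop :=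
  ∀ (x : Euc d) (r : ℝ), 0 < r → μ (Metric.ball x r) ≤ ENNReal.ofReal (C₀ * r ^ n)

/-- A (closed, axis-parallel) cube with center in the support of `μ` and positive
side length. -/
structure CubeOf (μ : MeasureTheory.Measure (Euc d)) where
  c : Euc d
  ℓ : ℝ
  ℓ_pos : 0 < ℓ
  c_mem : c ∈ measSupp μ

namespace CubeOf

variable {μ : MeasureTheory.Measure (Euc d)}

/-- The set of points of a cube. -/
def set (Q : CubeOf μ) : Set (Euc d) := {y | ∀ i, |y i - Q.c i| ≤ Q.ℓ / 2}

/-- The concentric dilation `aQ` of a cube, as a set. -/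
def dil (Q : CubeOf μ) (a : ℝ) : Set (Euc d) := {y | ∀ i, |y i - Q.c i| ≤ a * Q.ℓ / 2}

/-- The cube `2^k Q`. -/
def pow2 (Q : CubeOf μ) (k : ℕ) : CubeOf μ :=
  ⟨Q.c, 2 ^ k * Q.ℓ, mul_pos (by positivity) Q.ℓ_pos, Q.c_mem⟩

/-- The cube `6^k Q`. -/
def pow6 (Q : CubeOf μ) (k : ℕ) : CubeOf μ :=
  ⟨Q.c, 6 ^ k * Q.ℓ, mul_pos (by positivity) Q.ℓ_pos, Q.c_mem⟩

end CubeOf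

/-- `(α,β)`-doubling cube: `μ(αQ) ≤ β μ(Q)`. -/
def IsDoubling (μ : MeasureTheory.Measure (Euc d)) (α β : ℝ) (Q : CubeOf μ) : Prop :=
  μ (Q.dil α) ≤ ENNReal.ofReal β * μ Q.set

/-- `N_{Q,R}`: the first integer `k ≥ 1` such that `l(2^k Q) ≥ l(R)`. -/
def NQR {μ : MeasureTheory.Measure (Euc d)} (Q R : CubeOf μ) : ℕ :=
  sInf {k : ℕ | 1 ≤ k ∧ R.ℓ ≤ 2 ^ k * Q.ℓ}

/-- The coefficient `K_{Q,R} = 1 + ∑_{k=1}^{N_{Q,R}} μ(2^k Q)/l(2^k Q)^n`. -/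
def Kcoef {μ : MeasureTheory.Measure (Euc d)} (n : ℕ) (Q R : CubeOf μ) : ℝ :=
  1 + ∑ k ∈ Finset.Icc 1 (NQR Q R), (μ ((Q.pow2 k).set)).toReal / ((2 ^ k * Q.ℓ) ^ n)

/-- The smallest `N ≥ 0` such that `2^N Q` is `(2,βd)`-doubling. -/
def tildeIdx (μ : MeasureTheory.Measure (Euc d)) (βd : ℝ) (Q : CubeOf μ) : ℕ :=
  sInf {N : ℕ | IsDoubling μ 2 βd (Q.pow2 N)}

/-- The cube `Q̃`: the smallest cube `2^N Q`, `N ≥ 0`, which is `(2,βd)`-doubling. -/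
def CubeOf.tilde {μ : MeasureTheory.Measure (Euc d)} (Q : CubeOf μ) (βd : ℝ) : CubeOf μ :=
  Q.pow2 (tildeIdx μ βd Q)

/-- The mean `m_Q f` of `f` over the cube `Q` with respect to `μ`. -/
def mQ (μ : MeasureTheory.Measure (Euc d)) (Q : CubeOf μ) (f : Euc d → ℝ) : ℝ :=
  ⨍ x in Q.set, f x ∂μ

/-- For `μ`-a.e. `x` there are `(2,βd)`-doubling cubes centered at `x` of arbitrarily
small side length. -/
def SmallDoublingAE (μ : MeasureTheory.Measure (Euc d)) (βd : ℝ) : Prop :=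
  ∀ᵐ x ∂μ, ∀ ℓ₀ : ℝ, 0 < ℓ₀ → ∃ Q : CubeOf μ, Q.c = x ∧ Q.ℓ < ℓ₀ ∧ IsDoubling μ 2 βd Q

/-- `C` is an admissible constant in the definition of the `RBMO(μ)` norm of `f`. -/
def RBMOBoundWith (μ : MeasureTheory.Measure (Euc d)) (n : ℕ) (βd : ℝ)
    (f : Euc d → ℝ) (C : ℝ≥0∞) : Prop :=
  (∀ Q : CubeOf μ,
    ∫⁻ x in Q.set, ENNReal.ofReal |f x - mQ μ (Q.tilde βd) f| ∂μ ≤ C * μ (Q.dil 2)) ∧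
  (∀ Q R : CubeOf μ, Q.set ⊆ R.set → IsDoubling μ 2 βd Q → IsDoubling μ 2 βd R →
    ENNReal.ofReal |mQ μ Q f - mQ μ R f| ≤ C * ENNReal.ofReal (Kcoef n Q R))

/-- The `RBMO(μ)` norm `‖f‖_*` (with value `∞` if `f ∉ RBMO(μ)`). -/
def rbmoNorm (μ : MeasureTheory.Measure (Euc d)) (n : ℕ) (βd : ℝ) (f : Euc d → ℝ) : ℝ≥0∞ :=
  sInf {C | RBMOBoundWith μ n βd f C}

/-- The conditions defining `‖f‖_{**,(ρ)}`, for a given family of numbers `fQ`. -/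
def StarStarBoundWith (μ : MeasureTheory.Measure (Euc d)) (n : ℕ) (ρ : ℝ)
    (f : Euc d → ℝ) (fQ : CubeOf μ → ℝ) (C : ℝ≥0∞) : Prop :=
  (∀ Q : CubeOf μ, ∫⁻ x in Q.set, ENNReal.ofReal |f x - fQ Q| ∂μ ≤ C * μ (Q.dil ρ)) ∧
  (∀ Q R : CubeOf μ, Q.set ⊆ R.set →
    ENNReal.ofReal |fQ Q - fQ R| ≤ C * ENNReal.ofReal (Kcoef n Q R))

/-- The norm `‖f‖_{**,(ρ)}`. -/
def starStarNorm (μ : MeasureTheory.Measure (Euc d)) (n : ℕ) (ρ : ℝ) (f : Euc d → ℝ) : ℝ≥0∞ :=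
  sInf {C | ∃ fQ : CubeOf μ → ℝ, StarStarBoundWith μ n ρ f fQ C}

end

noncomputable section

variable {d : ℕ}

/-- The conditions defining the `RBMO^p(μ)` norm. -/
def RBMOpBoundWith (μ : MeasureTheory.Measure (Euc d)) (n : ℕ) (βd : ℝ) (p : ℝ)
    (f : Euc d → ℝ) (C : ℝ≥0∞) : Prop :=
  (∀ Q : CubeOf μ,
    ∫⁻ x in Q.set, ENNReal.ofReal |f x - mQ μ (Q.tilde βd) f| ^ p ∂μ ≤ C ^ p * μ (Q.dil 2)) ∧
  (∀ Q R : CubeOf μ, Q.set ⊆ R.set → IsDoubling μ 2 βd Q → IsDoubling μ 2 βd R →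
    ENNReal.ofReal |mQ μ Q f - mQ μ R f| ≤ C * ENNReal.ofReal (Kcoef n Q R))

/-- The `RBMO^p(μ)` norm `‖f‖_{*,p}`. -/
def rbmoPNorm (μ : MeasureTheory.Measure (Euc d)) (n : ℕ) (βd : ℝ) (p : ℝ)
    (f : Euc d → ℝ) : ℝ≥0∞ :=
  sInf {C | RBMOpBoundWith μ n βd p f C}

/-- Condition (b) of Lemma `fifi` of the paper, with constant `Cb`. -/
def CondB (μ : MeasureTheory.Measure (Euc d)) (n : ℕ) (ρ : ℝ)
    (f : Euc d → ℝ) (Cb : ℝ≥0∞) : Prop :=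
  (∀ Q : CubeOf μ, ∫⁻ x in Q.set, ENNReal.ofReal |f x - mQ μ Q f| ∂μ ≤ Cb * μ (Q.dil ρ)) ∧
  (∀ Q R : CubeOf μ, Q.set ⊆ R.set →
    ENNReal.ofReal |mQ μ Q f - mQ μ R f| ≤
      Cb * ENNReal.ofReal (Kcoef n Q R) * (μ (Q.dil ρ) / μ Q.set + μ (R.dil ρ) / μ R.set))

/-- Condition (c) of Lemma `fifi` of the paper, with constant `Cc`. -/
def CondC (μ : MeasureTheory.Measure (Euc d)) (n : ℕ) (βd : ℝ)
    (f : Euc d → ℝ) (Cc : ℝ≥0∞) : Prop :=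
  (∀ Q : CubeOf μ, IsDoubling μ 2 βd Q →
    ∫⁻ x in Q.set, ENNReal.ofReal |f x - mQ μ Q f| ∂μ ≤ Cc * μ Q.set) ∧
  (∀ Q R : CubeOf μ, Q.set ⊆ R.set → IsDoubling μ 2 βd Q → IsDoubling μ 2 βd R →
    ENNReal.ofReal |mQ μ Q f - mQ μ R f| ≤ Cc * ENNReal.ofReal (Kcoef n Q R))

/-- The conditions defining the norm `‖f‖_∘`, relative to a choice `αQ` of minimizers. -/
def CircBoundWith (μ : MeasureTheory.Measure (Euc d)) (n : ℕ) (βd : ℝ)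
    (f : Euc d → ℝ) (αQ : CubeOf μ → ℝ) (C : ℝ≥0∞) : Prop :=
  (∀ Q : CubeOf μ,
    ∫⁻ x in Q.set, ENNReal.ofReal |f x - αQ (Q.tilde βd)| ∂μ ≤ C * μ (Q.dil 2)) ∧
  (∀ Q R : CubeOf μ, Q.set ⊆ R.set → IsDoubling μ 2 βd Q → IsDoubling μ 2 βd R →
    ENNReal.ofReal |αQ Q - αQ R| ≤ C * ENNReal.ofReal (Kcoef n Q R))

/-- The norm `‖f‖_∘`, relative to a choice `αQ` of minimizers. -/
def circNorm (μ : MeasureTheory.Measure (Euc d)) (n : ℕ) (βd : ℝ)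
    (f : Euc d → ℝ) (αQ : CubeOf μ → ℝ) : ℝ≥0∞ :=
  sInf {C | CircBoundWith μ n βd f αQ C}

/-- An atomic block: a function supported on a cube `R`, with zero integral, of the
form `b = ∑ λⱼ aⱼ` with `aⱼ` supported on cubes `Qⱼ ⊆ R` and
`‖aⱼ‖_{L∞(μ)} ≤ (μ(2Qⱼ) K_{Qⱼ,R})⁻¹`. -/
structure AtomicBlock (μ : MeasureTheory.Measure (Euc d)) (n : ℕ) where
  b : Euc d → ℝ
  R : CubeOf μ
  lam : ℕ → ℝ
  a : ℕ → Euc d → ℝ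
  Qj : ℕ → CubeOf μ
  integrable : MeasureTheory.Integrable b μ
  supp_b : ∀ x ∉ R.set, b x = 0
  int_zero : ∫ x, b x ∂μ = 0
  Qj_sub : ∀ j, (Qj j).set ⊆ R.set
  a_supp : ∀ j, ∀ x ∉ (Qj j).set, a j x = 0
  a_meas : ∀ j, MeasureTheory.AEStronglyMeasurable (a j) μ
  a_bound : ∀ j, MeasureTheory.eLpNorm (a j) ⊤ μ ≤
    (μ ((Qj j).dil 2) * ENNReal.ofReal (Kcoef n (Qj j) R))⁻¹
  lam_summable : Summable fun j => |lam j|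
  b_eq : ∀ᵐ x ∂μ, HasSum (fun j => lam j * a j x) (b x)

/-- `|b|_{H^{1,∞}_atb(μ)} = ∑ⱼ |λⱼ|` for the given decomposition. -/
def AtomicBlock.size {μ : MeasureTheory.Measure (Euc d)} {n : ℕ}
    (B : AtomicBlock μ n) : ℝ :=
  ∑' j, |B.lam j|

/-- The `H^{1,∞}_atb(μ)` norm (with value `∞` outside the space). -/
def hatbNorm (μ : MeasureTheory.Measure (Euc d)) (n : ℕ) (f : Euc d → ℝ) : ℝ≥0∞ :=
  sInf {t : ℝ≥0∞ | ∃ B : ℕ → AtomicBlock μ n,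
    (∀ᵐ x ∂μ, HasSum (fun i => (B i).b x) (f x)) ∧
    t = ∑' i, ENNReal.ofReal ((B i).size)}

/-- A `p`-atomic block: like an atomic block, but with the size condition
`‖aⱼ‖_{L^p(μ)} ≤ μ(2Qⱼ)^{1/p-1} K_{Qⱼ,R}⁻¹`. -/
structure PAtomicBlock (μ : MeasureTheory.Measure (Euc d)) (n : ℕ) (p : ℝ) where
  b : Euc d → ℝ
  R : CubeOf μ
  lam : ℕ → ℝ
  a : ℕ → Euc d → ℝ
  Qj : ℕ → CubeOf μ
  integrable : MeasureTheory.Integrable b μ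
  supp_b : ∀ x ∉ R.set, b x = 0
  int_zero : ∫ x, b x ∂μ = 0
  Qj_sub : ∀ j, (Qj j).set ⊆ R.set
  a_supp : ∀ j, ∀ x ∉ (Qj j).set, a j x = 0
  a_meas : ∀ j, MeasureTheory.AEStronglyMeasurable (a j) μ
  a_bound : ∀ j, MeasureTheory.eLpNorm (a j) (ENNReal.ofReal p) μ ≤
    μ ((Qj j).dil 2) ^ (1 / p - 1) * (ENNReal.ofReal (Kcoef n (Qj j) R))⁻¹
  lam_summable : Summable fun j => |lam j|
  b_eq : ∀ᵐ x ∂μ, HasSum (fun j => lam j * a j x) (b x)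

/-- `|b|_{H^{1,p}_atb(μ)} = ∑ⱼ |λⱼ|` for the given decomposition. -/
def PAtomicBlock.size {μ : MeasureTheory.Measure (Euc d)} {n : ℕ} {p : ℝ}
    (B : PAtomicBlock μ n p) : ℝ :=
  ∑' j, |B.lam j|

/-- The `H^{1,p}_atb(μ)` norm (with value `∞` outside the space). -/
def hatbPNorm (μ : MeasureTheory.Measure (Euc d)) (n : ℕ) (p : ℝ) (f : Euc d → ℝ) : ℝ≥0∞ :=
  sInf {t : ℝ≥0∞ | ∃ B : ℕ → PAtomicBlock μ n p,
    (∀ᵐ x ∂μ, HasSum (fun i => (B i).b x) (f x)) ∧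
    t = ∑' i, ENNReal.ofReal ((B i).size)}

/-- A Calderón–Zygmund kernel of dimension `n`, with constant `Ck` and Hölder
exponent `δ`. -/
def CZKernelBound (n : ℕ) (k : Euc d → Euc d → ℝ) (Ck δ : ℝ) : Prop :=
  (∀ x y : Euc d, x ≠ y → |k x y| ≤ Ck / dist x y ^ (n : ℝ)) ∧
  (∀ x x' y : Euc d, x ≠ y → dist x x' ≤ dist x y / 2 →
    |k x y - k x' y| + |k y x - k y x'| ≤ Ck * dist x x' ^ δ / dist x y ^ ((n : ℝ) + δ))

/-- The truncated operator `T_ε f(x) = ∫_{|x-y|>ε} k(x,y) f(y) dμ(y)`. -/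
def trunc (μ : MeasureTheory.Measure (Euc d)) (k : Euc d → Euc d → ℝ) (ε : ℝ)
    (f : Euc d → ℝ) (x : Euc d) : ℝ :=
  ∫ y in {y | ε < dist x y}, k x y * f y ∂μ

/-- The non-centered doubling maximal operator `N`. -/
def Nop (μ : MeasureTheory.Measure (Euc d)) (βd : ℝ) (f : Euc d → ℝ) (x : Euc d) : ℝ≥0∞ :=
  ⨆ (Q : CubeOf μ) (_ : x ∈ Q.set) (_ : IsDoubling μ 2 βd Q),
    (∫⁻ y in Q.set, ENNReal.ofReal |f y| ∂μ) / μ Q.set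

/-- The sharp maximal operator `M^♯`. -/
def Msharp (μ : MeasureTheory.Measure (Euc d)) (n : ℕ) (βd : ℝ)
    (f : Euc d → ℝ) (x : Euc d) : ℝ≥0∞ :=
  (⨆ (Q : CubeOf μ) (_ : x ∈ Q.set),
    (∫⁻ y in Q.set, ENNReal.ofReal |f y - mQ μ (Q.tilde βd) f| ∂μ) / μ (Q.dil (3/2))) +
  ⨆ (Q : CubeOf μ) (R : CubeOf μ) (_ : x ∈ Q.set) (_ : Q.set ⊆ R.set)
      (_ : IsDoubling μ 2 βd Q) (_ : IsDoubling μ 2 βd R),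
    ENNReal.ofReal (|mQ μ Q f - mQ μ R f| / Kcoef n Q R)

/-- The weight functions `w_i = χ_{Q_i} / ∑_k χ_{Q_k}` of the Calderón–Zygmund
decomposition. -/
def czWeight {μ : MeasureTheory.Measure (Euc d)} (J : Finset ℕ) (Q : ℕ → CubeOf μ)
    (i : ℕ) (x : Euc d) : ℝ :=
  Set.indicator (Q i).set
    (fun y => (((J.filter fun kk => y ∈ (Q kk).set).card : ℝ))⁻¹) x

/-- The smallest `(6,6^{n+1})`-doubling cube of the form `6^k Q`, `k ≥ 1`. -/
def smallest6Doubling (μ : MeasureTheory.Measure (Euc d)) (n : ℕ) (Q : CubeOf μ) : CubeOf μ :=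
  Q.pow6 (sInf {k : ℕ | 1 ≤ k ∧ IsDoubling μ 6 (6 ^ (n + 1)) (Q.pow6 k)})

end
noncomputable section AuxTolsa

open MeasureTheory Metric Set Function
open scoped Classical ENNReal NNReal BigOperators

variable {d : ℕ} {μ : MeasureTheory.Measure (Euc d)}

lemma euc_coord_le_dist (x y : Euc d) (i : Fin d) : |x i - y i| ≤ dist x y := by
  have h := EuclideanSpace.dist_eq x y
  rw [h]
  have h1 : |x i - y i| = dist (x i) (y i) := (Real.dist_eq _ _).symm
  rw [h1]
  have : dist (x i) (y i) ^ 2 ≤ ∑ j : Fin d, dist (x j) (y j) ^ 2 :=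
    Finset.single_le_sum (f := fun j => dist (x j) (y j) ^ 2)
      (fun j _ => sq_nonneg _) (Finset.mem_univ i)
  calc dist (x i) (y i) = √(dist (x i) (y i) ^ 2) := by
        rw [Real.sqrt_sq dist_nonneg]
    _ ≤ √(∑ j : Fin d, dist (x j) (y j) ^ 2) := Real.sqrt_le_sqrt this

lemma euc_dist_le (x y : Euc d) {r : ℝ} (hr : 0 ≤ r) (h : ∀ i, |x i - y i| ≤ r) :
    dist x y ≤ Real.sqrt d * r := by
  rw [EuclideanSpace.dist_eq]
  have : (∑ j : Fin d, dist (x j) (y j) ^ 2) ≤ ∑ _j : Fin d, r ^ 2 := by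
    apply Finset.sum_le_sum
    intro j _
    rw [Real.dist_eq]
    exact pow_le_pow_left₀ (abs_nonneg _) (h j) 2
  calc √(∑ j : Fin d, dist (x j) (y j) ^ 2) ≤ √(∑ _j : Fin d, r ^ 2) :=
        Real.sqrt_le_sqrt this
    _ = √(d * r ^ 2) := by rw [Finset.sum_const, Finset.card_univ, Fintype.card_fin,
        nsmul_eq_mul]
    _ = Real.sqrt d * r := by
        rw [Real.sqrt_mul (Nat.cast_nonneg d), Real.sqrt_sq hr]

lemma one_le_sqrt_d {d : ℕ} (h : 1 ≤ d) : (1:ℝ) ≤ Real.sqrt d := by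
  rw [show (1:ℝ) = Real.sqrt 1 by simp]
  exact Real.sqrt_le_sqrt (by exact_mod_cast h)

namespace CubeOf

lemma isClosed_dil (Q : CubeOf μ) (a : ℝ) : IsClosed (Q.dil a) := by
  have : Q.dil a = ⋂ i : Fin d, {y : Euc d | |y i - Q.c i| ≤ a * Q.ℓ / 2} := by
    ext y; simp [CubeOf.dil, Set.mem_iInter]
  rw [this]
  apply isClosed_iInter
  intro i
  have hc : Continuous fun y : Euc d => |y i - Q.c i| :=
    (((EuclideanSpace.proj (𝕜 := ℝ) i).continuous).sub continuous_const).abs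
  exact isClosed_le hc continuous_const

lemma measurableSet_dil (Q : CubeOf μ) (a : ℝ) : MeasurableSet (Q.dil a) :=
  (Q.isClosed_dil a).measurableSet

lemma set_eq_dil_one (Q : CubeOf μ) : Q.set = Q.dil 1 := by
  ext y; simp [CubeOf.set, CubeOf.dil]

lemma isClosed_set (Q : CubeOf μ) : IsClosed Q.set := by
  rw [Q.set_eq_dil_one]; exact Q.isClosed_dil 1

lemma measurableSet_set (Q : CubeOf μ) : MeasurableSet Q.set :=
  Q.isClosed_set.measurableSet

lemma dil_mono (Q : CubeOf μ) {a b : ℝ} (h : a ≤ b) : Q.dil a ⊆ Q.dil b := by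
  intro y hy i
  have h1 := hy i
  have h2 := Q.ℓ_pos
  nlinarith

lemma set_subset_dil (Q : CubeOf μ) {a : ℝ} (h : 1 ≤ a) : Q.set ⊆ Q.dil a := by
  rw [Q.set_eq_dil_one]; exact Q.dil_mono h

lemma mem_set_self (Q : CubeOf μ) : Q.c ∈ Q.set := by
  intro i
  rw [sub_self, abs_zero]
  have := Q.ℓ_pos
  positivity

lemma pow2_c (Q : CubeOf μ) (m : ℕ) : (Q.pow2 m).c = Q.c := rfl
lemma pow2_ℓ (Q : CubeOf μ) (m : ℕ) : (Q.pow2 m).ℓ = 2 ^ m * Q.ℓ := rfl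

lemma pow2_set (Q : CubeOf μ) (m : ℕ) : (Q.pow2 m).set = Q.dil (2 ^ m) := rfl

lemma dil_subset_ball (Q : CubeOf μ) (hd : 1 ≤ d) {a : ℝ} (ha : 0 < a) :
    Q.dil a ⊆ Metric.ball Q.c (Real.sqrt d * (a * Q.ℓ)) := by
  intro y hy
  rw [Metric.mem_ball]
  have hl := Q.ℓ_pos
  have h1 : dist y Q.c ≤ Real.sqrt d * (a * Q.ℓ / 2) :=
    euc_dist_le _ _ (by positivity) fun i => hy i
  have hsd := one_le_sqrt_d hd
  have h2 : 0 < a * Q.ℓ := mul_pos ha hl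
  have h3 : Real.sqrt d * (a * Q.ℓ / 2) < Real.sqrt d * (a * Q.ℓ) :=
    mul_lt_mul_of_pos_left (by linarith) (lt_of_lt_of_le one_pos hsd)
  linarith

lemma ball_subset_set (Q : CubeOf μ) : Metric.ball Q.c (Q.ℓ / 2) ⊆ Q.set := by
  intro y hy i
  rw [Metric.mem_ball] at hy
  calc |y i - Q.c i| ≤ dist y Q.c := euc_coord_le_dist y Q.c i
    _ ≤ Q.ℓ / 2 := le_of_lt hy

lemma measure_set_pos (Q : CubeOf μ) : 0 < μ Q.set := by
  have h := Q.c_mem (Q.ℓ / 2) (by have := Q.ℓ_pos; positivity)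
  exact lt_of_lt_of_le h (measure_mono Q.ball_subset_set)

lemma measure_dil_le {n : ℕ} {C₀ : ℝ} (hg : GrowthBound μ n C₀) (Q : CubeOf μ)
    (hd : 1 ≤ d) {a : ℝ} (ha : 0 < a) :
    μ (Q.dil a) ≤ ENNReal.ofReal (C₀ * (Real.sqrt d * (a * Q.ℓ)) ^ n) := by
  refine le_trans (measure_mono (Q.dil_subset_ball hd ha)) ?_
  exact hg Q.c _ (mul_pos (lt_of_lt_of_le one_pos (one_le_sqrt_d hd)) (mul_pos ha Q.ℓ_pos))

lemma measure_dil_lt_top {n : ℕ} {C₀ : ℝ} (hg : GrowthBound μ n C₀) (Q : CubeOf μ)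
    (hd : 1 ≤ d) (a : ℝ) : μ (Q.dil a) < ⊤ := by
  have h1 : Q.dil a ⊆ Q.dil (|a| + 1) := Q.dil_mono (by
    cases abs_cases a with
    | inl h => linarith [h.1]
    | inr h => linarith [h.1, abs_nonneg a])
  refine lt_of_le_of_lt (measure_mono h1) ?_
  refine lt_of_le_of_lt (Q.measure_dil_le hg hd (by positivity)) ?_
  exact ENNReal.ofReal_lt_top

lemma measure_set_lt_top {n : ℕ} {C₀ : ℝ} (hg : GrowthBound μ n C₀) (Q : CubeOf μ)
    (hd : 1 ≤ d) : μ Q.set < ⊤ := by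
  rw [Q.set_eq_dil_one]; exact Q.measure_dil_lt_top hg hd 1

lemma measure_dil_pos (Q : CubeOf μ) {a : ℝ} (ha : 1 ≤ a) : 0 < μ (Q.dil a) :=
  lt_of_lt_of_le Q.measure_set_pos (measure_mono (Q.set_subset_dil ha))

end CubeOf

lemma sigmaFinite_of_growth {n : ℕ} {C₀ : ℝ} (hg : GrowthBound μ n C₀) :
    SigmaFinite μ := by
  refine ⟨⟨⟨fun m => Metric.ball 0 (m + 1), fun _ => trivial, fun m => ?_, ?_⟩⟩⟩
  · exact lt_of_le_of_lt (hg 0 (m + 1) (by positivity)) ENNReal.ofReal_lt_top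
  · apply Set.eq_univ_of_forall
    intro x
    rw [Set.mem_iUnion]
    obtain ⟨m, hm⟩ := exists_nat_gt (dist x 0)
    exact ⟨m, by rw [Metric.mem_ball]; push_cast; linarith⟩

lemma measure_compl_measSupp (μ : MeasureTheory.Measure (Euc d)) :
    μ (measSupp μ)ᶜ = 0 := by
  apply measure_null_of_locally_null
  intro x hx
  simp only [measSupp, Set.mem_compl_iff, Set.mem_setOf_eq, not_forall] at hx
  obtain ⟨r, hr, hr0⟩ := hx
  push_neg at hr0
  exact ⟨Metric.ball x r, mem_nhdsWithin_of_mem_nhds (Metric.ball_mem_nhds x hr),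
    le_antisymm hr0 (by simp)⟩

end AuxTolsa
noncomputable section AuxTolsaB

open MeasureTheory Metric Set Function
open scoped Classical ENNReal NNReal BigOperators

variable {d : ℕ} {μ : MeasureTheory.Measure (Euc d)} {k : Euc d → Euc d → ℝ}
  {f g : Euc d → ℝ} {ε : ℝ}

lemma measurableSet_truncRegion (x : Euc d) (ε : ℝ) :
    MeasurableSet {y : Euc d | ε < dist x y} :=
  (isOpen_lt continuous_const (continuous_const.dist continuous_id)).measurableSet

lemma trunc_congr (h : f =ᵐ[μ] g) : trunc μ k ε f = trunc μ k ε g := by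
  funext x
  exact integral_congr_ae (ae_restrict_of_ae (h.mono fun y hy => by dsimp only; rw [hy]))

lemma stronglyMeasurable_trunc [SFinite μ] (hk : Measurable (Function.uncurry k))
    (hf : Measurable f) : StronglyMeasurable (trunc μ k ε f) := by
  have hS : MeasurableSet {p : Euc d × Euc d | ε < dist p.1 p.2} :=
    (isOpen_lt continuous_const continuous_dist).measurableSet
  have hG : StronglyMeasurable fun p : Euc d × Euc d =>
      ({p : Euc d × Euc d | ε < dist p.1 p.2}.indicator
        (fun p => k p.1 p.2 * f p.2)) p := by
    apply Measurable.stronglyMeasurable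
    exact Measurable.indicator (hk.mul (hf.comp measurable_snd)) hS
  have h1 : trunc μ k ε f = fun x => ∫ y,
      ({p : Euc d × Euc d | ε < dist p.1 p.2}.indicator
        (fun p => k p.1 p.2 * f p.2)) (x, y) ∂μ := by
    funext x
    rw [trunc, ← integral_indicator (measurableSet_truncRegion x ε)]
    refine integral_congr_ae (ae_of_all _ fun y => ?_)
    by_cases h : ε < dist x y
    · simp only [Set.indicator, Set.mem_setOf_eq, h, if_true]
    · simp only [Set.indicator, Set.mem_setOf_eq, h, if_false]
  rw [h1]
  exact hG.integral_prod_right'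

lemma measurable_ofReal_abs_trunc [SFinite μ] (hk : Measurable (Function.uncurry k))
    (hf : AEStronglyMeasurable f μ) :
    Measurable fun x => ENNReal.ofReal |trunc μ k ε f x| := by
  rw [trunc_congr (k := k) (ε := ε) hf.ae_eq_mk]
  have h2 := stronglyMeasurable_trunc (μ := μ) (ε := ε) hk
    hf.stronglyMeasurable_mk.measurable
  exact h2.measurable.abs.ennreal_ofReal

lemma abs_trunc_le_lintegral (x : Euc d) :
    ENNReal.ofReal |trunc μ k ε f x| ≤
      ∫⁻ y in {y | ε < dist x y}, ENNReal.ofReal |k x y| * ENNReal.ofReal |f y| ∂μ := by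
  rw [← Real.enorm_eq_ofReal_abs]
  refine le_trans (enorm_integral_le_lintegral_enorm _) (lintegral_mono fun y => ?_)
  rw [Real.enorm_eq_ofReal_abs, abs_mul, ENNReal.ofReal_mul (abs_nonneg _)]

lemma trunc_pointwise_bound {x : Euc d} {κ : ℝ}
    (hb : ∀ y, ε < dist x y → f y ≠ 0 → |k x y| ≤ κ) :
    ENNReal.ofReal |trunc μ k ε f x| ≤
      ENNReal.ofReal κ * ∫⁻ y, ENNReal.ofReal |f y| ∂μ := by
  refine le_trans (abs_trunc_le_lintegral x) ?_
  have h1 : ∫⁻ y in {y | ε < dist x y}, ENNReal.ofReal |k x y| * ENNReal.ofReal |f y| ∂μ ≤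
      ∫⁻ y in {y | ε < dist x y}, ENNReal.ofReal κ * ENNReal.ofReal |f y| ∂μ := by
    apply lintegral_mono_ae
    rw [ae_restrict_iff' (measurableSet_truncRegion x ε)]
    apply ae_of_all
    intro y hy
    by_cases h : f y = 0
    · simp [h]
    · exact mul_le_mul_left (ENNReal.ofReal_le_ofReal (hb y hy h)) _
  refine le_trans h1 ?_
  rw [lintegral_const_mul' _ _ ENNReal.ofReal_ne_top]
  exact mul_le_mul_right (setLIntegral_le_lintegral _ _) _

lemma lintegral_abs_le_of_supp {s : Set (Euc d)} {V : ℝ≥0∞} (hs : MeasurableSet s)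
    (h0 : ∀ y ∉ s, f y = 0) (hV : ∀ᵐ y ∂μ, ENNReal.ofReal |f y| ≤ V) :
    ∫⁻ y, ENNReal.ofReal |f y| ∂μ ≤ V * μ s := by
  have h1 : ∀ᵐ y ∂μ, ENNReal.ofReal |f y| ≤ s.indicator (fun _ => V) y := by
    refine hV.mono fun y hy => ?_
    by_cases h : y ∈ s
    · rwa [Set.indicator_of_mem h]
    · rw [h0 y h]; simp
  refine le_trans (lintegral_mono_ae h1) ?_
  rw [lintegral_indicator_const hs]

/-- Dyadic annuli estimate for the far field. -/
lemma lintegral_annuli {n : ℕ} {C₀ δ : ℝ} (hg : GrowthBound μ n C₀) (hC₀ : 0 < C₀)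
    (hδ : 0 < δ) (z : Euc d) {r₀ : ℝ} (hr₀ : 0 < r₀) :
    ∫⁻ x in {x | r₀ ≤ dist x z}, ENNReal.ofReal (1 / dist x z ^ ((n : ℝ) + δ)) ∂μ ≤
      ENNReal.ofReal (C₀ * 2 ^ n / r₀ ^ δ * (1 - ((2:ℝ)⁻¹) ^ δ)⁻¹) := by
  set q : ℝ := ((2:ℝ)⁻¹) ^ δ with hq
  have hq0 : 0 ≤ q := Real.rpow_nonneg (by norm_num) δ
  have hq1 : q < 1 := Real.rpow_lt_one (by norm_num) (by norm_num) hδ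
  set A : ℕ → Set (Euc d) := fun m =>
    {x | 2 ^ m * r₀ ≤ dist x z ∧ dist x z < 2 ^ (m + 1) * r₀} with hA
  have hcover : {x | r₀ ≤ dist x z} ⊆ ⋃ m, A m := by
    intro x hx
    simp only [Set.mem_setOf_eq] at hx
    have hP : ∃ m : ℕ, dist x z < 2 ^ (m + 1) * r₀ := by
      obtain ⟨m, hm⟩ := pow_unbounded_of_one_lt (dist x z / r₀) (one_lt_two (α := ℝ))
      exact ⟨m, by
        rw [div_lt_iff₀ hr₀] at hm
        have : (2:ℝ) ^ m ≤ 2 ^ (m + 1) := by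
          apply pow_le_pow_right₀ (by norm_num) (by omega)
        nlinarith [hr₀, dist_nonneg (x := x) (y := z)]⟩
    let m := Nat.find hP
    have hm2 : dist x z < 2 ^ (m + 1) * r₀ := Nat.find_spec hP
    have hm1 : 2 ^ m * r₀ ≤ dist x z := by
      rcases Nat.eq_zero_or_pos m with h0 | h0
      · rw [h0]; simpa using hx
      · have := Nat.find_min hP (m := m - 1) (Nat.sub_lt h0 one_pos)
        push_neg at this
        calc (2:ℝ) ^ m * r₀ = 2 ^ (m - 1 + 1) * r₀ := by
              rw [Nat.sub_add_cancel h0]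
          _ ≤ dist x z := this
    exact Set.mem_iUnion.mpr ⟨m, hm1, hm2⟩
  have hmeas : ∀ m, μ (A m) ≤ ENNReal.ofReal (C₀ * (2 ^ (m+1) * r₀) ^ n) := by
    intro m
    refine le_trans (measure_mono ?_) (hg z _ (by positivity))
    intro x hx
    rw [Metric.mem_ball]
    exact hx.2
  have hterm : ∀ m, ∫⁻ x in A m, ENNReal.ofReal (1 / dist x z ^ ((n : ℝ) + δ)) ∂μ ≤
      ENNReal.ofReal ((C₀ * 2 ^ n / r₀ ^ δ) * q ^ m) := by
    intro m
    have h2m : (0:ℝ) < 2 ^ m * r₀ := by positivity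
    have hbd : ∀ x ∈ A m, ENNReal.ofReal (1 / dist x z ^ ((n : ℝ) + δ)) ≤
        ENNReal.ofReal (1 / (2 ^ m * r₀) ^ ((n : ℝ) + δ)) := by
      intro x hx
      apply ENNReal.ofReal_le_ofReal
      apply one_div_le_one_div_of_le (Real.rpow_pos_of_pos h2m _)
      exact Real.rpow_le_rpow (le_of_lt h2m) hx.1 (by positivity)
    have hAm : MeasurableSet (A m) := by
      apply MeasurableSet.inter
      · exact (isClosed_le continuous_const (continuous_id.dist continuous_const)).measurableSet
      · exact (isOpen_lt (continuous_id.dist continuous_const) continuous_const).measurableSet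
    calc ∫⁻ x in A m, ENNReal.ofReal (1 / dist x z ^ ((n : ℝ) + δ)) ∂μ
        ≤ ∫⁻ _x in A m, ENNReal.ofReal (1 / (2 ^ m * r₀) ^ ((n : ℝ) + δ)) ∂μ := by
          apply lintegral_mono_ae
          rw [ae_restrict_iff' hAm]
          exact ae_of_all _ hbd
      _ = ENNReal.ofReal (1 / (2 ^ m * r₀) ^ ((n : ℝ) + δ)) * μ (A m) :=
          setLIntegral_const _ _
      _ ≤ ENNReal.ofReal (1 / (2 ^ m * r₀) ^ ((n : ℝ) + δ)) *
          ENNReal.ofReal (C₀ * (2 ^ (m+1) * r₀) ^ n) := by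
          exact mul_le_mul_right (hmeas m) _
      _ ≤ ENNReal.ofReal ((C₀ * 2 ^ n / r₀ ^ δ) * q ^ m) := by
          rw [← ENNReal.ofReal_mul (by positivity)]
          apply ENNReal.ofReal_le_ofReal
          apply le_of_eq
          have hqq : q = ((2:ℝ) ^ δ)⁻¹ := Real.inv_rpow (by norm_num) δ
          have h2d : (0:ℝ) < (2:ℝ) ^ δ := Real.rpow_pos_of_pos two_pos δ
          have hrd : (0:ℝ) < r₀ ^ δ := Real.rpow_pos_of_pos hr₀ δ
          have hrpow : ((2:ℝ) ^ m * r₀) ^ ((n : ℝ) + δ) =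
              (2 ^ m * r₀) ^ n * (2 ^ m * r₀) ^ δ := by
            rw [Real.rpow_add h2m, Real.rpow_natCast]
          have h2 : ((2:ℝ) ^ m * r₀) ^ δ = (2 ^ δ) ^ m * r₀ ^ δ := by
            rw [Real.mul_rpow (by positivity) (le_of_lt hr₀)]
            congr 1
            rw [← Real.rpow_natCast (2:ℝ) m, ← Real.rpow_mul (by norm_num : (0:ℝ) ≤ 2),
              mul_comm, Real.rpow_mul (by norm_num : (0:ℝ) ≤ 2), Real.rpow_natCast]
          have h1 : (2:ℝ) ^ (m+1) * r₀ = 2 * (2 ^ m * r₀) := by ring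
          rw [hrpow, h2, h1, hqq, mul_pow]
          have hp1 : (0:ℝ) < (2:ℝ) ^ m * r₀ := h2m
          have hp2 : (0:ℝ) < ((2:ℝ) ^ m * r₀) ^ n := pow_pos hp1 n
          have hp3 : (0:ℝ) < ((2:ℝ) ^ δ) ^ m := pow_pos h2d m
          rw [inv_pow]
          field_simp
          ring
  calc ∫⁻ x in {x | r₀ ≤ dist x z}, ENNReal.ofReal (1 / dist x z ^ ((n : ℝ) + δ)) ∂μ
      ≤ ∫⁻ x, ENNReal.ofReal (1 / dist x z ^ ((n : ℝ) + δ))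
          ∂(Measure.sum fun m => μ.restrict (A m)) := by
        exact lintegral_mono'
          (le_trans (Measure.restrict_mono hcover le_rfl) Measure.restrict_iUnion_le) le_rfl
    _ = ∑' m, ∫⁻ x in A m, ENNReal.ofReal (1 / dist x z ^ ((n : ℝ) + δ)) ∂μ :=
        lintegral_sum_measure _ _
    _ ≤ ∑' m, ENNReal.ofReal ((C₀ * 2 ^ n / r₀ ^ δ) * q ^ m) :=
        ENNReal.tsum_le_tsum (fun m => hterm m)
    _ = ∑' m, ENNReal.ofReal (C₀ * 2 ^ n / r₀ ^ δ) * (ENNReal.ofReal q) ^ m := by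
        congr 1
        funext m
        rw [ENNReal.ofReal_mul (by positivity), ENNReal.ofReal_pow hq0]
    _ = ENNReal.ofReal (C₀ * 2 ^ n / r₀ ^ δ) * (1 - ENNReal.ofReal q)⁻¹ := by
        rw [ENNReal.tsum_mul_left, ENNReal.tsum_geometric]
    _ ≤ ENNReal.ofReal (C₀ * 2 ^ n / r₀ ^ δ * (1 - ((2:ℝ)⁻¹) ^ δ)⁻¹) := by
        rw [ENNReal.ofReal_mul (by positivity)]
        apply mul_le_mul_right
        rw [← ENNReal.ofReal_one, ← ENNReal.ofReal_sub _ hq0,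
          ← ENNReal.ofReal_inv_of_pos (by linarith)]
  done

end AuxTolsaB
noncomputable section AuxTolsaC

open MeasureTheory Metric Set Function
open scoped Classical ENNReal NNReal BigOperators

variable {d : ℕ} {μ : MeasureTheory.Measure (Euc d)} {k : Euc d → Euc d → ℝ}

lemma lintegral_set_split (f : Euc d → ℝ≥0∞) {s t u : Set (Euc d)} (h : s ⊆ t ∪ u) :
    ∫⁻ x in s, f x ∂μ ≤ ∫⁻ x in t, f x ∂μ + ∫⁻ x in u, f x ∂μ := by
  rw [← lintegral_add_measure]
  exact lintegral_mono'
    (le_trans (Measure.restrict_mono h le_rfl) (Measure.restrict_union_le t u)) le_rfl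

lemma enn_cancel {a b : ℝ≥0∞} (h0 : a ≠ 0) (ht : a ≠ ⊤) : (a * b)⁻¹ * a = b⁻¹ := by
  rw [ENNReal.mul_inv (Or.inl h0) (Or.inl ht), mul_comm, ← mul_assoc,
    ENNReal.mul_inv_cancel h0 ht, one_mul]

lemma kernel_bound {n : ℕ} {Ck δ : ℝ} (hCZ : CZKernelBound n k Ck δ) (hCk : 0 ≤ Ck)
    {x y : Euc d} {r : ℝ} (hr : 0 < r) (hdist : r ≤ dist x y) : |k x y| ≤ Ck / r ^ n := by
  have hxy : x ≠ y := by
    intro h; rw [h, dist_self] at hdist; linarith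
  refine le_trans (hCZ.1 x y hxy) ?_
  rw [Real.rpow_natCast]
  have h1 : (0:ℝ) < r ^ n := pow_pos hr n
  have h2 : r ^ n ≤ dist x y ^ n := pow_le_pow_left₀ hr.le hdist n
  exact div_le_div_of_nonneg_left hCk h1 h2 |>.trans_eq rfl |>.trans le_rfl
    |>.trans (le_of_eq rfl)

lemma one_le_Kcoef (n : ℕ) (Q R : CubeOf μ) : 1 ≤ Kcoef n Q R := by
  unfold Kcoef
  have : (0:ℝ) ≤ ∑ k ∈ Finset.Icc 1 (NQR Q R),
      (μ ((Q.pow2 k).set)).toReal / ((2 ^ k * Q.ℓ) ^ n) := by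
    apply Finset.sum_nonneg
    intro m _
    have := Q.ℓ_pos
    exact div_nonneg ENNReal.toReal_nonneg (by positivity)
  linarith

lemma NQR_spec (Q R : CubeOf μ) : 1 ≤ NQR Q R ∧ R.ℓ ≤ 2 ^ (NQR Q R) * Q.ℓ := by
  have hne : {m : ℕ | 1 ≤ m ∧ R.ℓ ≤ 2 ^ m * Q.ℓ}.Nonempty := by
    obtain ⟨m, hm⟩ := pow_unbounded_of_one_lt (R.ℓ / Q.ℓ) (one_lt_two (α := ℝ))
    refine ⟨m + 1, by omega, ?_⟩
    rw [div_lt_iff₀ Q.ℓ_pos] at hm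
    have h2 : (2:ℝ) ^ m ≤ 2 ^ (m + 1) := pow_le_pow_right₀ (by norm_num) (by omega)
    nlinarith [Q.ℓ_pos]
  exact Nat.sInf_mem hne

/-- each `K`-type term is bounded by the growth constant -/
lemma Kterm_le {n : ℕ} {C₀ : ℝ} (hg : GrowthBound μ n C₀) (hC₀ : 0 ≤ C₀) (hd : 1 ≤ d)
    (Q : CubeOf μ) (m : ℕ) :
    (μ ((Q.pow2 m).set)).toReal / ((2 ^ m * Q.ℓ) ^ n) ≤ C₀ * Real.sqrt d ^ n := by
  have hl := Q.ℓ_pos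
  have hsd : (0:ℝ) ≤ Real.sqrt d := Real.sqrt_nonneg _
  have h1 : μ ((Q.pow2 m).set) ≤ ENNReal.ofReal (C₀ * (Real.sqrt d * (2 ^ m * Q.ℓ)) ^ n) := by
    rw [Q.pow2_set m]
    exact Q.measure_dil_le hg hd (by positivity)
  have h2 : (μ ((Q.pow2 m).set)).toReal ≤ C₀ * (Real.sqrt d * (2 ^ m * Q.ℓ)) ^ n := by
    refine le_trans (ENNReal.toReal_mono ENNReal.ofReal_ne_top h1) ?_
    rw [ENNReal.toReal_ofReal (by positivity)]
  rw [div_le_iff₀ (by positivity)]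
  calc (μ ((Q.pow2 m).set)).toReal ≤ C₀ * (Real.sqrt d * (2 ^ m * Q.ℓ)) ^ n := h2
    _ = C₀ * Real.sqrt d ^ n * (2 ^ m * Q.ℓ) ^ n := by rw [mul_pow]; ring

lemma integrable_kernel_mul {n : ℕ} {Ck δ ε : ℝ} (hCZ : CZKernelBound n k Ck δ)
    (hCk : 0 ≤ Ck) (hk : Measurable (Function.uncurry k)) (hε : 0 < ε) (x : Euc d)
    {g : Euc d → ℝ} {s : Set (Euc d)} {c : ℝ} (hc : 0 ≤ c)
    (hgm : AEStronglyMeasurable g μ) (hgV : ∀ᵐ y ∂μ, |g y| ≤ c)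
    (hg0 : ∀ y ∉ s, g y = 0) (hs : MeasurableSet s) (hμs : μ s < ⊤) :
    Integrable (fun y => k x y * g y) (μ.restrict {y | ε < dist x y}) := by
  have hkx : Measurable fun y => k x y := hk.comp measurable_prodMk_left
  have hmeas : AEStronglyMeasurable (fun y => k x y * g y) (μ.restrict {y | ε < dist x y}) :=
    (hkx.aestronglyMeasurable.mul hgm).restrict
  have hdom : Integrable (fun y => s.indicator (fun _ => Ck / ε ^ n * c) y)
      (μ.restrict {y | ε < dist x y}) := by
    rw [integrable_indicator_iff hs]
    exact integrableOn_const (lt_of_le_of_lt (le_trans (Measure.restrict_le_self _) (le_refl _)) hμs).ne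
  refine Integrable.mono' hdom hmeas ?_
  rw [ae_restrict_iff' (measurableSet_truncRegion x ε)]
  filter_upwards [hgV] with y hy hmem
  by_cases hys : y ∈ s
  · rw [Set.indicator_of_mem hys, norm_mul]
    have hb := kernel_bound hCZ hCk hε (le_of_lt hmem)
    rw [Real.norm_eq_abs, Real.norm_eq_abs]
    have h1 : (0:ℝ) ≤ Ck / ε ^ n := by positivity
    exact mul_le_mul hb hy (abs_nonneg _) h1
  · rw [hg0 y hys]
    simp [Set.indicator]
    positivity

lemma trunc_zero_fn (μ : MeasureTheory.Measure (Euc d)) (k : Euc d → Euc d → ℝ) (ε : ℝ) :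
    trunc μ k ε (fun _ => 0) = fun _ => 0 := by
  funext x
  simp [trunc]

end AuxTolsaC
noncomputable section AuxTolsaD

open MeasureTheory Metric Set Function
open scoped Classical ENNReal NNReal BigOperators

variable {d : ℕ} {μ : MeasureTheory.Measure (Euc d)} {k : Euc d → Euc d → ℝ}

/-- number of grid pieces in each direction -/
def Mpc (ρ : ℝ) : ℕ := ⌈3 * ρ⌉₊

/-- the constant in the near-region atom estimate -/
def nearConst (d n : ℕ) (C₀ Ck ρ A : ℝ) : ℝ :=
  (Mpc ρ : ℝ) ^ d * (|A| + Ck * C₀ * Real.sqrt d ^ n * (4 * (Mpc ρ : ℝ)) ^ n) +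
    Ck * 8 ^ n * (1 + ((d : ℝ) + 3) * (C₀ * Real.sqrt d ^ n))

lemma nearConst_nonneg {d n : ℕ} {C₀ Ck ρ A : ℝ} (hC₀ : 0 ≤ C₀) (hCk : 0 ≤ Ck) :
    0 ≤ nearConst d n C₀ Ck ρ A := by
  have h1 : (0:ℝ) ≤ Real.sqrt d := Real.sqrt_nonneg _
  have h2 : (0:ℝ) ≤ |A| := abs_nonneg _
  have h3 : (0:ℝ) ≤ (Mpc ρ : ℝ) := Nat.cast_nonneg _
  unfold nearConst
  positivity

lemma sum_shift_le (s : ℕ → ℝ) (hs0 : ∀ m, 0 ≤ s m) (N c : ℕ) (B : ℝ)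
    (hB : ∀ m, s m ≤ B) :
    ∑ j ∈ Finset.Icc 1 (N + c), s (j + 1) ≤
      (∑ m ∈ Finset.Icc 1 N, s m) + ((c : ℝ) + 1) * B := by
  have him : ∑ j ∈ Finset.Icc 1 (N + c), s (j + 1) =
      ∑ m ∈ Finset.Icc 2 (N + c + 1), s m := by
    have himg : Finset.Icc 2 (N + c + 1) = (Finset.Icc 1 (N + c)).image (· + 1) := by
      ext m
      simp only [Finset.mem_Icc, Finset.mem_image]
      constructor
      · intro ⟨h1, h2⟩
        exact ⟨m - 1, ⟨by omega, by omega⟩, by omega⟩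
      · rintro ⟨a, ⟨h1, h2⟩, rfl⟩
        omega
    rw [himg, Finset.sum_image (fun a _ b _ h => by omega)]
  rw [him]
  have hsub : ∑ m ∈ Finset.Icc 2 (N + c + 1), s m ≤ ∑ m ∈ Finset.Icc 1 (N + c + 1), s m :=
    Finset.sum_le_sum_of_subset_of_nonneg (Finset.Icc_subset_Icc (by omega) le_rfl)
      fun m _ _ => hs0 m
  refine le_trans hsub ?_
  have hsplit : Finset.Icc 1 (N + c + 1) = Finset.Icc 1 N ∪ Finset.Icc (N + 1) (N + c + 1) := by
    ext m
    simp only [Finset.mem_Icc, Finset.mem_union]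
    omega
  have hdisj : Disjoint (Finset.Icc 1 N) (Finset.Icc (N + 1) (N + c + 1)) := by
    rw [Finset.disjoint_left]
    intro m h1 h2
    simp only [Finset.mem_Icc] at h1 h2
    omega
  rw [hsplit, Finset.sum_union hdisj]
  refine add_le_add le_rfl ?_
  calc ∑ m ∈ Finset.Icc (N + 1) (N + c + 1), s m
      ≤ (Finset.Icc (N + 1) (N + c + 1)).card • B :=
        Finset.sum_le_card_nsmul _ _ _ fun m _ => hB m
    _ = ((c : ℝ) + 1) * B := by
        rw [Nat.card_Icc, nsmul_eq_mul]
        congr 1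
        have : N + c + 1 + 1 - (N + 1) = c + 1 := by omega
        rw [this]
        push_cast
        ring

set_option maxHeartbeats 2000000 in
/-- Main per-atom estimate on the near region `2^(d+2) R`. -/
lemma atom_near {n : ℕ} {C₀ Ck δ ρ A : ℝ} (hd : 1 ≤ d)
    (hC₀ : 0 < C₀) (hCk : 0 ≤ Ck) (hρ : 1 < ρ)
    (hg : GrowthBound μ n C₀)
    (hk : Measurable (Function.uncurry k)) (hCZ : CZKernelBound n k Ck δ)
    (hT : ∀ (Q : CubeOf μ) (a : Euc d → ℝ), MeasureTheory.MemLp a ⊤ μ →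
      (∀ x ∉ Q.set, a x = 0) → ∀ ε : ℝ, 0 < ε →
        ∫⁻ x in Q.set, ENNReal.ofReal |trunc μ k ε a x| ∂μ ≤
          ENNReal.ofReal A * (MeasureTheory.eLpNorm a ⊤ μ * μ (Q.dil ρ)))
    (Q₀ R : CubeOf μ) (hQR : Q₀.set ⊆ R.set)
    (a : Euc d → ℝ) (ha0 : ∀ y ∉ Q₀.set, a y = 0) (ham : AEStronglyMeasurable a μ)
    (hab : MeasureTheory.eLpNorm a ⊤ μ ≤
      (μ (Q₀.dil 2) * ENNReal.ofReal (Kcoef n Q₀ R))⁻¹)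
    {ε : ℝ} (hε : 0 < ε) :
    ∫⁻ x in R.dil (2 ^ (d + 2)), ENNReal.ofReal |trunc μ k ε a x| ∂μ ≤
      ENNReal.ofReal (nearConst d n C₀ Ck ρ A) := by
  haveI : SigmaFinite μ := sigmaFinite_of_growth hg
  have hl := Q₀.ℓ_pos
  have hsd0 : (0:ℝ) ≤ Real.sqrt d := Real.sqrt_nonneg _
  set M : ℕ := Mpc ρ with hMdef
  have hM3ρ : 3 * ρ ≤ (M : ℝ) := Nat.le_ceil _
  have hM1 : 1 ≤ M := by
    by_contra h
    push_neg at h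
    interval_cases M
    · simp at hM3ρ; linarith
  have hMposR : (0:ℝ) < M := by exact_mod_cast hM1
  set K := Kcoef n Q₀ R with hKdef
  have hK1 : 1 ≤ K := one_le_Kcoef n Q₀ R
  have hKenn : (1:ℝ≥0∞) ≤ ENNReal.ofReal K := ENNReal.one_le_ofReal.2 hK1
  have hKne0 : ENNReal.ofReal K ≠ 0 := by
    intro h
    rw [h] at hKenn
    simp at hKenn
  have hμ2pos : 0 < μ (Q₀.dil 2) := Q₀.measure_dil_pos one_le_two
  have hμ2top : μ (Q₀.dil 2) < ⊤ := Q₀.measure_dil_lt_top hg hd 2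
  set V : ℝ≥0∞ := (μ (Q₀.dil 2) * ENNReal.ofReal K)⁻¹ with hVdef
  have hVμ2 : V * μ (Q₀.dil 2) = (ENNReal.ofReal K)⁻¹ := enn_cancel hμ2pos.ne' hμ2top.ne
  have hKinv1 : (ENNReal.ofReal K)⁻¹ ≤ 1 := ENNReal.inv_le_one.2 hKenn
  have hVtop : V < ⊤ := by
    rw [hVdef, ENNReal.inv_lt_top]
    exact ENNReal.mul_pos hμ2pos.ne' hKne0
  have haV : ∀ᵐ y ∂μ, ENNReal.ofReal |a y| ≤ V := by
    filter_upwards [ae_le_eLpNormEssSup (f := a) (μ := μ)] with y hy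
    rw [← Real.enorm_eq_ofReal_abs]
    exact le_trans hy (le_trans (le_of_eq eLpNorm_exponent_top.symm) hab)
  have haVr : ∀ᵐ y ∂μ, |a y| ≤ V.toReal := by
    filter_upwards [haV] with y hy
    exact (ENNReal.ofReal_le_iff_le_toReal hVtop.ne).1 hy
  have hVt0 : 0 ≤ V.toReal := ENNReal.toReal_nonneg
  have hμQ₀2 : μ Q₀.set ≤ μ (Q₀.dil 2) := measure_mono (Q₀.set_subset_dil one_le_two)
  have hL1 : ∫⁻ y, ENNReal.ofReal |a y| ∂μ ≤ V * μ Q₀.set :=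
    lintegral_abs_le_of_supp Q₀.measurableSet_set ha0 haV
  have hVμQ₀ : V * μ Q₀.set ≤ (ENNReal.ofReal K)⁻¹ := by
    rw [← hVμ2]
    exact mul_le_mul_right hμQ₀2 V
  -- grid pieces
  set lo : Fin d → ℝ := fun i => Q₀.c i - Q₀.ℓ / 2 with hlodef
  set φ : Euc d → (Fin d → Fin M) := fun y i =>
    ⟨min (M - 1) ⌊(y i - lo i) * M / Q₀.ℓ⌋₊,
      lt_of_le_of_lt (min_le_left _ _) (Nat.sub_lt hM1 one_pos)⟩ with hφdef
  set av : (Fin d → Fin M) → Euc d → ℝ := fun v y => if φ y = v then a y else 0 with havdef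
  have hφmeas : ∀ v, MeasurableSet {y : Euc d | φ y = v} := by
    intro v
    have heq : {y : Euc d | φ y = v} =
        ⋂ i, {y : Euc d | min (M - 1) ⌊(y i - lo i) * M / Q₀.ℓ⌋₊ = (v i : ℕ)} := by
      ext y
      simp only [Set.mem_iInter, Set.mem_setOf_eq, funext_iff, Fin.ext_iff, hφdef]
    rw [heq]
    refine MeasurableSet.iInter fun i => ?_
    have hm : Measurable fun y : Euc d => min (M - 1) ⌊(y i - lo i) * M / Q₀.ℓ⌋₊ := by
      refine Measurable.min measurable_const (Measurable.nat_floor ?_)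
      exact (((EuclideanSpace.proj (𝕜 := ℝ) i).continuous.measurable.sub
        measurable_const).mul measurable_const).div_const _
    exact hm (measurableSet_singleton _)
  have hcell : ∀ y ∈ Q₀.set, ∀ i : Fin d,
      ((φ y i : ℕ) : ℝ) * (Q₀.ℓ / M) ≤ y i - lo i ∧
        y i - lo i ≤ (((φ y i : ℕ) : ℝ) + 1) * (Q₀.ℓ / M) := by
    intro y hy i
    obtain ⟨hyl, hyr⟩ := abs_le.1 (hy i)
    have hu0 : 0 ≤ y i - lo i := by rw [hlodef]; simp only; linarith
    have hu1 : y i - lo i ≤ Q₀.ℓ := by rw [hlodef]; simp only; linarith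
    set t : ℝ := (y i - lo i) * M / Q₀.ℓ with htdef
    have ht0 : 0 ≤ t := by positivity
    have htM : t ≤ M := by
      rw [htdef, div_le_iff₀ hl]
      nlinarith
    have hval : ((φ y i : ℕ) : ℝ) = ((min (M - 1) ⌊t⌋₊ : ℕ) : ℝ) := rfl
    have key : ((φ y i : ℕ) : ℝ) ≤ t ∧ t ≤ ((φ y i : ℕ) : ℝ) + 1 := by
      rcases le_or_gt ⌊t⌋₊ (M - 1) with hc | hc
      · rw [hval, min_eq_right hc]
        exact ⟨Nat.floor_le ht0, le_of_lt (Nat.lt_floor_add_one t)⟩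
      · have hfl : (M : ℝ) ≤ (⌊t⌋₊ : ℝ) := by exact_mod_cast (by omega : M ≤ ⌊t⌋₊)
        have htM' : (M : ℝ) ≤ t := le_trans hfl (Nat.floor_le ht0)
        have htMe : t = M := le_antisymm htM htM'
        rw [hval, min_eq_left (by omega)]
        have hcast : ((M - 1 : ℕ) : ℝ) = (M : ℝ) - 1 := by
          rw [Nat.cast_sub hM1]
          norm_num
        rw [hcast, htMe]
        constructor <;> linarith
    have hlM : (0:ℝ) < Q₀.ℓ / M := by positivity
    have hj0 : (0:ℝ) ≤ ((φ y i : ℕ) : ℝ) := Nat.cast_nonneg _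
    have hsimp : (y i - lo i) * M / Q₀.ℓ * (Q₀.ℓ / M) = y i - lo i := by
      field_simp
    constructor
    · have h1 := mul_le_mul_of_nonneg_right key.1 (le_of_lt hlM)
      rw [htdef] at h1
      rw [hsimp] at h1
      exact h1
    · have h2 := mul_le_mul_of_nonneg_right key.2 (le_of_lt hlM)
      rw [htdef] at h2
      rw [hsimp] at h2
      exact h2
  have hsame : ∀ y ∈ Q₀.set, ∀ y' ∈ Q₀.set, φ y = φ y' →
      ∀ i, |y i - y' i| ≤ Q₀.ℓ / M := by
    intro y hy y' hy' hφeq i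
    have h1 := hcell y hy i
    have h2 := hcell y' hy' i
    rw [hφeq] at h1
    have e1 : y i - y' i = (y i - lo i) - (y' i - lo i) := by ring
    rw [abs_le, e1]
    constructor
    · linarith [h1.1, h1.2, h2.1, h2.2]
    · linarith [h1.1, h1.2, h2.1, h2.2]
  have hav_eq : ∀ y, a y = ∑ v : Fin d → Fin M, av v y := by
    intro y
    rw [havdef]
    simp
  have hav0 : ∀ v, ∀ y, y ∉ Q₀.set → av v y = 0 := by
    intro v y hy
    rw [havdef]
    simp only
    rw [ha0 y hy]
    split <;> rfl
  have havm : ∀ v, AEStronglyMeasurable (av v) μ := by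
    intro v
    have haux : av v = Set.indicator {y | φ y = v} a := by
      funext y
      rw [havdef, Set.indicator_apply]
      rfl
    rw [haux]
    exact ham.indicator (hφmeas v)
  have hav_abs : ∀ v y, |av v y| ≤ |a y| := by
    intro v y
    rw [havdef]
    simp only
    split
    · exact le_refl _
    · simp [abs_nonneg]
  have havV : ∀ v, ∀ᵐ y ∂μ, |av v y| ≤ V.toReal := fun v =>
    haVr.mono fun y h => le_trans (hav_abs v y) h
  have havVe : ∀ v, ∀ᵐ y ∂μ, ENNReal.ofReal |av v y| ≤ V := fun v =>
    haV.mono fun y h => le_trans (ENNReal.ofReal_le_ofReal (hav_abs v y)) h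
  have havb : ∀ v, MeasureTheory.eLpNorm (av v) ⊤ μ ≤ V := fun v =>
    le_trans (eLpNorm_mono fun y => by
      rw [Real.norm_eq_abs, Real.norm_eq_abs]
      exact hav_abs v y) hab
  have havL1 : ∀ v, ∫⁻ y, ENNReal.ofReal |av v y| ∂μ ≤ V * μ Q₀.set := fun v =>
    lintegral_abs_le_of_supp Q₀.measurableSet_set (hav0 v) (havVe v)
  have havsupp : ∀ v y, av v y ≠ 0 → φ y = v ∧ y ∈ Q₀.set ∧ a y ≠ 0 := by
    intro v y h
    rw [havdef] at h
    simp only at h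
    by_cases hc : φ y = v
    · rw [if_pos hc] at h
      refine ⟨hc, ?_, h⟩
      by_contra hq
      exact h (ha0 y hq)
    · rw [if_neg hc] at h
      exact absurd rfl h
  -- pointwise splitting into pieces
  have hsplitpt : ∀ x, ENNReal.ofReal |trunc μ k ε a x| ≤
      ∑ v : Fin d → Fin M, ENNReal.ofReal |trunc μ k ε (av v) x| := by
    intro x
    have hint : ∀ v ∈ Finset.univ, Integrable (fun y => k x y * av v y)
        (μ.restrict {y | ε < dist x y}) := fun v _ =>
      integrable_kernel_mul hCZ hCk hk hε x hVt0 (havm v) (havV v) (hav0 v)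
        Q₀.measurableSet_set (Q₀.measure_set_lt_top hg hd)
    have heq : trunc μ k ε a x = ∑ v : Fin d → Fin M, trunc μ k ε (av v) x := by
      rw [trunc]
      have hfun : (fun y => k x y * a y) =
          fun y => ∑ v : Fin d → Fin M, k x y * av v y := by
        funext y
        rw [← Finset.mul_sum, ← hav_eq y]
      rw [hfun, integral_finset_sum Finset.univ hint]
      rfl
    rw [heq]
    refine le_trans (ENNReal.ofReal_le_ofReal (Finset.abs_sum_le_sum_abs _ _)) ?_
    rw [ENNReal.ofReal_sum_of_nonneg (fun v _ => abs_nonneg _)]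
  -- per piece bound
  set pervC : ℝ := |A| + Ck * C₀ * Real.sqrt d ^ n * (4 * (M : ℝ)) ^ n with hpervCdef
  have hpervC0 : 0 ≤ pervC := by
    rw [hpervCdef]
    positivity
  have hperv : ∀ v : Fin d → Fin M,
      ∫⁻ x in Q₀.dil 2, ENNReal.ofReal |trunc μ k ε (av v) x| ∂μ ≤
        ENNReal.ofReal pervC := by
    intro v
    by_cases hvS : ({y | φ y = v} ∩ Q₀.set ∩ measSupp μ).Nonempty
    · -- main case
      obtain ⟨xv, ⟨hxv1, hxv2⟩, hxv3⟩ := hvS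
      set Qv : CubeOf μ := ⟨xv, 3 * Q₀.ℓ / M, by positivity, hxv3⟩ with hQvdef
      have hQvset : ∀ z, z ∈ Qv.set ↔ ∀ i, |z i - xv i| ≤ 3 * Q₀.ℓ / M / 2 := by
        intro z
        exact Iff.rfl
      have hsuppv : ∀ y ∉ Qv.set, av v y = 0 := by
        intro y hy
        by_contra h
        obtain ⟨hφy, hyQ, _⟩ := havsupp v y h
        refine hy fun i => ?_
        have h1 : |y i - xv i| ≤ Q₀.ℓ / M := hsame y hyQ xv hxv2 (hφy.trans hxv1.symm) i
        have h2 : (0:ℝ) < Q₀.ℓ / M := by positivity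
        have h3 : 3 * Q₀.ℓ / M / 2 = (3 / 2) * (Q₀.ℓ / M) := by ring
        calc |y i - Qv.c i| = |y i - xv i| := rfl
          _ ≤ Q₀.ℓ / M := h1
          _ ≤ 3 * Q₀.ℓ / M / 2 := by rw [h3]; linarith
      have hMemv : MeasureTheory.MemLp (av v) ⊤ μ := ⟨havm v, lt_of_le_of_lt (havb v) hVtop⟩
      have hdilsub : Qv.dil ρ ⊆ Q₀.dil 2 := by
        intro z hz i
        have h1 := hz i
        have h2 := hxv2 i
        have hρM : ρ * (3 * Q₀.ℓ / M) ≤ Q₀.ℓ := by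
          rw [← mul_div_assoc, div_le_iff₀ hMposR]
          nlinarith
        have hQvl : Qv.ℓ = 3 * Q₀.ℓ / M := rfl
        have hQvc : Qv.c i = xv i := rfl
        rw [hQvl, hQvc] at h1
        calc |z i - Q₀.c i| ≤ |z i - xv i| + |xv i - Q₀.c i| := abs_sub_le _ _ _
          _ ≤ ρ * (3 * Q₀.ℓ / M) / 2 + Q₀.ℓ / 2 := by
              refine add_le_add (le_trans h1 (le_of_eq ?_)) h2
              ring
          _ ≤ Q₀.ℓ / 2 + Q₀.ℓ / 2 := by linarith
          _ = 2 * Q₀.ℓ / 2 := by ring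
      have htest := hT Qv (av v) hMemv hsuppv ε hε
      have htest2 : ∫⁻ x in Qv.set, ENNReal.ofReal |trunc μ k ε (av v) x| ∂μ ≤
          ENNReal.ofReal |A| := by
        refine le_trans htest ?_
        have hstep : ENNReal.ofReal A * (MeasureTheory.eLpNorm (av v) ⊤ μ * μ (Qv.dil ρ)) ≤
            ENNReal.ofReal |A| * (V * μ (Q₀.dil 2)) :=
          mul_le_mul' (ENNReal.ofReal_le_ofReal (le_abs_self A))
            (mul_le_mul' (havb v) (measure_mono hdilsub))
        refine le_trans hstep ?_
        rw [hVμ2]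
        calc ENNReal.ofReal |A| * (ENNReal.ofReal K)⁻¹ ≤ ENNReal.ofReal |A| * 1 :=
              mul_le_mul_right hKinv1 _
          _ = ENNReal.ofReal |A| := mul_one _
      have hcrude : ∫⁻ x in Q₀.dil 2 \ Qv.set, ENNReal.ofReal |trunc μ k ε (av v) x| ∂μ ≤
          ENNReal.ofReal (Ck * C₀ * Real.sqrt d ^ n * (4 * (M : ℝ)) ^ n) := by
        set κ : ℝ := Ck / (Q₀.ℓ / (2 * M)) ^ n with hκdef
        have hκ0 : 0 ≤ κ := by
          rw [hκdef]
          positivity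
        have hpt : ∀ x ∈ Q₀.dil 2 \ Qv.set, ENNReal.ofReal |trunc μ k ε (av v) x| ≤
            ENNReal.ofReal κ * (V * μ Q₀.set) := by
          intro x hx
          refine le_trans (trunc_pointwise_bound ?_) (mul_le_mul_right (havL1 v) _)
          intro y hdy hay
          obtain ⟨hφy, hyQ, _⟩ := havsupp v y hay
          have hxout : ¬ ∀ i, |x i - xv i| ≤ 3 * Q₀.ℓ / M / 2 := hx.2
          push_neg at hxout
          obtain ⟨i, hi⟩ := hxout
          have hyv : |y i - xv i| ≤ Q₀.ℓ / M := hsame y hyQ xv hxv2 (hφy.trans hxv1.symm) i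
          have hxy : Q₀.ℓ / (2 * M) ≤ |x i - y i| := by
            have habs : |x i - xv i| ≤ |x i - y i| + |y i - xv i| := abs_sub_le _ _ _
            have hexp : 3 * Q₀.ℓ / M / 2 - Q₀.ℓ / M = Q₀.ℓ / (2 * M) := by
              field_simp
              ring
            linarith
          exact kernel_bound hCZ hCk (by positivity) (le_trans hxy (euc_coord_le_dist x y i))
        calc ∫⁻ x in Q₀.dil 2 \ Qv.set, ENNReal.ofReal |trunc μ k ε (av v) x| ∂μ
            ≤ ∫⁻ _x in Q₀.dil 2 \ Qv.set, ENNReal.ofReal κ * (V * μ Q₀.set) ∂μ := by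
              refine lintegral_mono_ae ?_
              rw [ae_restrict_iff' ((Q₀.measurableSet_dil 2).diff Qv.measurableSet_set)]
              exact ae_of_all _ hpt
          _ = ENNReal.ofReal κ * (V * μ Q₀.set) * μ (Q₀.dil 2 \ Qv.set) :=
              setLIntegral_const _ _
          _ ≤ ENNReal.ofReal κ * 1 * μ (Q₀.dil 2) :=
              mul_le_mul' (mul_le_mul_right (le_trans hVμQ₀ hKinv1) _)
                (measure_mono Set.diff_subset)
          _ ≤ ENNReal.ofReal κ * ENNReal.ofReal (C₀ * (Real.sqrt d * (2 * Q₀.ℓ)) ^ n) := by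
              rw [mul_one]
              exact mul_le_mul_right (Q₀.measure_dil_le hg hd two_pos) _
          _ = ENNReal.ofReal (κ * (C₀ * (Real.sqrt d * (2 * Q₀.ℓ)) ^ n)) := by
              rw [← ENNReal.ofReal_mul hκ0]
          _ = ENNReal.ofReal (Ck * C₀ * Real.sqrt d ^ n * (4 * (M : ℝ)) ^ n) := by
              congr 1
              rw [hκdef]
              rw [div_mul_eq_mul_div, div_eq_iff (by positivity)]
              rw [mul_pow, mul_pow, mul_pow, div_pow]
              rw [show ((4:ℝ))^n = 2^n * 2^n by rw [← mul_pow]; norm_num]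
              field_simp
              ring
      refine le_trans (lintegral_set_split _
        (show Q₀.dil 2 ⊆ Qv.set ∪ (Q₀.dil 2 \ Qv.set) from fun x hx => by
          by_cases hc : x ∈ Qv.set
          · exact Or.inl hc
          · exact Or.inr ⟨hx, hc⟩)) ?_
      rw [hpervCdef, ENNReal.ofReal_add (abs_nonneg A) (by positivity)]
      exact add_le_add htest2 hcrude
    · -- null case
      have hsub : {y | av v y ≠ 0} ⊆ (measSupp μ)ᶜ := by
        intro y hy hmem
        obtain ⟨h1, h2, _⟩ := havsupp v y hy
        exact hvS ⟨y, ⟨h1, h2⟩, hmem⟩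
      have hnull : av v =ᵐ[μ] (fun _ => 0) := by
        have hμ0 : μ {y | av v y ≠ 0} = 0 :=
          measure_mono_null hsub (measure_compl_measSupp μ)
        rw [Filter.EventuallyEq, ae_iff]
        exact hμ0
      have hz : trunc μ k ε (av v) = fun _ => 0 := by
        rw [trunc_congr hnull, trunc_zero_fn]
      rw [hz]
      simp
  -- part (i) total
  have hparti : ∫⁻ x in Q₀.dil 2, ENNReal.ofReal |trunc μ k ε a x| ∂μ ≤
      ENNReal.ofReal ((M : ℝ) ^ d * pervC) := by
    calc ∫⁻ x in Q₀.dil 2, ENNReal.ofReal |trunc μ k ε a x| ∂μ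
        ≤ ∫⁻ x in Q₀.dil 2, ∑ v : Fin d → Fin M,
            ENNReal.ofReal |trunc μ k ε (av v) x| ∂μ :=
          lintegral_mono hsplitpt
      _ = ∑ v : Fin d → Fin M, ∫⁻ x in Q₀.dil 2,
            ENNReal.ofReal |trunc μ k ε (av v) x| ∂μ :=
          lintegral_finset_sum _ fun v _ => measurable_ofReal_abs_trunc hk (havm v)
      _ ≤ ∑ _v : Fin d → Fin M, ENNReal.ofReal pervC :=
          Finset.sum_le_sum fun v _ => hperv v
      _ = (Fintype.card (Fin d → Fin M)) • ENNReal.ofReal pervC := by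
          rw [Finset.sum_const, Finset.card_univ]
      _ = ENNReal.ofReal ((M : ℝ) ^ d * pervC) := by
          rw [Fintype.card_fun, Fintype.card_fin, Fintype.card_fin, nsmul_eq_mul,
            ← ENNReal.ofReal_natCast (M ^ d), ← ENNReal.ofReal_mul (by positivity)]
          congr 1
          push_cast
          ring
  -- part (ii): annuli
  set N := NQR Q₀ R with hNdef
  obtain ⟨hN1, hN2⟩ := NQR_spec Q₀ R
  rw [← hNdef] at hN1 hN2
  have hNearBig : R.dil (2 ^ (d + 2)) ⊆ Q₀.dil (2 ^ (N + d + 3)) := by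
    intro x hx i
    have h1 := hx i
    have h2 : |Q₀.c i - R.c i| ≤ R.ℓ / 2 := hQR Q₀.mem_set_self i
    have hRl := R.ℓ_pos
    have hcalc : |x i - Q₀.c i| ≤ |x i - R.c i| + |R.c i - Q₀.c i| := abs_sub_le _ _ _
    rw [abs_sub_comm (R.c i)] at hcalc
    have hp1 : (2:ℝ) ^ (d + 2) * R.ℓ / 2 + R.ℓ / 2 ≤ 2 ^ (d + 3) * R.ℓ / 2 := by
      have hone : (1:ℝ) ≤ 2 ^ (d + 2) := one_le_pow₀ (by norm_num)
      have h1 : (1:ℝ) * R.ℓ ≤ 2 ^ (d + 2) * R.ℓ := mul_le_mul_of_nonneg_right hone hRl.le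
      have he : (2:ℝ) ^ (d + 3) * R.ℓ / 2 = 2 ^ (d + 2) * R.ℓ / 2 + 2 ^ (d + 2) * R.ℓ / 2 := by
        rw [pow_succ]
        ring
      rw [he]
      linarith
    have hp2 : (2:ℝ) ^ (d + 3) * R.ℓ / 2 ≤ 2 ^ (N + d + 3) * Q₀.ℓ / 2 := by
      have hpow : (0:ℝ) < 2 ^ (d + 3) := pow_pos (by norm_num) _
      have h1 : 2 ^ (d + 3) * R.ℓ ≤ 2 ^ (d + 3) * (2 ^ N * Q₀.ℓ) :=
        mul_le_mul_of_nonneg_left hN2 hpow.le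
      have he : (2:ℝ) ^ (N + d + 3) * Q₀.ℓ = 2 ^ (d + 3) * (2 ^ N * Q₀.ℓ) := by
        rw [show N + d + 3 = (d + 3) + N by omega, pow_add]
        ring
      have : (2:ℝ) ^ (N + d + 3) * Q₀.ℓ / 2 = 2 ^ (d + 3) * (2 ^ N * Q₀.ℓ) / 2 := by
        rw [he]
      rw [this]
      linarith
    linarith
  have hannulus : ∀ j, 1 ≤ j →
      ∫⁻ x in Q₀.dil (2 ^ (j + 1)) \ Q₀.dil (2 ^ j),
          ENNReal.ofReal |trunc μ k ε a x| ∂μ ≤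
        ENNReal.ofReal (Ck * 8 ^ n *
            ((μ ((Q₀.pow2 (j + 1)).set)).toReal / ((2 ^ (j + 1) * Q₀.ℓ) ^ n))) *
          (ENNReal.ofReal K)⁻¹ := by
    intro j hj
    have h2j : (2:ℝ) ≤ 2 ^ j := by
      calc (2:ℝ) = 2 ^ 1 := (pow_one 2).symm
        _ ≤ 2 ^ j := pow_le_pow_right₀ one_le_two hj
    have hrj : (0:ℝ) < 2 ^ j * Q₀.ℓ / 4 := by positivity
    have hpt : ∀ x ∈ Q₀.dil (2 ^ (j + 1)) \ Q₀.dil (2 ^ j),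
        ENNReal.ofReal |trunc μ k ε a x| ≤
          ENNReal.ofReal (Ck / (2 ^ j * Q₀.ℓ / 4) ^ n) * (V * μ Q₀.set) := by
      intro x hx
      refine le_trans (trunc_pointwise_bound ?_) (mul_le_mul_right hL1 _)
      intro y hdy hay
      have hyQ : y ∈ Q₀.set := by
        by_contra hq
        exact hay (ha0 y hq)
      have hxout : ¬ ∀ i, |x i - Q₀.c i| ≤ (2:ℝ) ^ j * Q₀.ℓ / 2 := hx.2
      push_neg at hxout
      obtain ⟨i, hi⟩ := hxout
      have hyc := hyQ i
      have hxy : 2 ^ j * Q₀.ℓ / 4 ≤ |x i - y i| := by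
        have habs : |x i - Q₀.c i| ≤ |x i - y i| + |y i - Q₀.c i| := abs_sub_le _ _ _
        nlinarith
      exact kernel_bound hCZ hCk hrj (le_trans hxy (euc_coord_le_dist x y i))
    have hμj : μ (Q₀.dil (2 ^ (j + 1))) ≠ ⊤ := (Q₀.measure_dil_lt_top hg hd _).ne
    calc ∫⁻ x in Q₀.dil (2 ^ (j + 1)) \ Q₀.dil (2 ^ j),
            ENNReal.ofReal |trunc μ k ε a x| ∂μ
        ≤ ∫⁻ _x in Q₀.dil (2 ^ (j + 1)) \ Q₀.dil (2 ^ j),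
            ENNReal.ofReal (Ck / (2 ^ j * Q₀.ℓ / 4) ^ n) * (V * μ Q₀.set) ∂μ := by
          refine lintegral_mono_ae ?_
          rw [ae_restrict_iff' ((Q₀.measurableSet_dil _).diff (Q₀.measurableSet_dil _))]
          exact ae_of_all _ hpt
      _ = ENNReal.ofReal (Ck / (2 ^ j * Q₀.ℓ / 4) ^ n) * (V * μ Q₀.set) *
            μ (Q₀.dil (2 ^ (j + 1)) \ Q₀.dil (2 ^ j)) := setLIntegral_const _ _
      _ ≤ ENNReal.ofReal (Ck / (2 ^ j * Q₀.ℓ / 4) ^ n) * (ENNReal.ofReal K)⁻¹ *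
            μ (Q₀.dil (2 ^ (j + 1))) :=
          mul_le_mul' (mul_le_mul_right hVμQ₀ _) (measure_mono Set.diff_subset)
      _ = ENNReal.ofReal (Ck / (2 ^ j * Q₀.ℓ / 4) ^ n) * μ (Q₀.dil (2 ^ (j + 1))) *
            (ENNReal.ofReal K)⁻¹ := by
          ring
      _ = ENNReal.ofReal (Ck * 8 ^ n *
            ((μ ((Q₀.pow2 (j + 1)).set)).toReal / ((2 ^ (j + 1) * Q₀.ℓ) ^ n))) *
          (ENNReal.ofReal K)⁻¹ := by
          congr 1
          conv_lhs => rw [← ENNReal.ofReal_toReal hμj]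
          rw [← ENNReal.ofReal_mul (by positivity)]
          congr 1
          rw [Q₀.pow2_set (j + 1)]
          have hpow : ((2:ℝ) ^ (j + 1) * Q₀.ℓ) = 8 * (2 ^ j * Q₀.ℓ / 4) := by
            rw [pow_succ]
            ring
          rw [hpow, mul_pow]
          have hne : ((2:ℝ) ^ j * Q₀.ℓ / 4) ^ n ≠ 0 := by positivity
          field_simp
  -- covering
  set E : ℕ → Set (Euc d) := fun j =>
    if 1 ≤ j ∧ j ≤ N + d + 2 then Q₀.dil (2 ^ (j + 1)) \ Q₀.dil (2 ^ j) else ∅ with hEdef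
  have hcov : R.dil (2 ^ (d + 2)) \ Q₀.dil 2 ⊆ ⋃ j, E j := by
    intro x hx
    have hxbig : x ∈ Q₀.dil (2 ^ (N + d + 3)) := hNearBig hx.1
    have hP : ∃ j, x ∈ Q₀.dil (2 ^ j) := ⟨N + d + 3, hxbig⟩
    have hnot1 : x ∉ Q₀.dil (2 ^ 1) := by
      intro hc
      rw [pow_one] at hc
      exact hx.2 hc
    have hnot0 : x ∉ Q₀.dil (2 ^ 0) := fun hc => hnot1 (Q₀.dil_mono (by norm_num) hc)
    have hfind2 : 2 ≤ Nat.find hP := by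
      rw [Nat.le_find_iff]
      intro j hj
      interval_cases j
      · exact hnot0
      · exact hnot1
    have hfindle : Nat.find hP ≤ N + d + 3 := Nat.find_min' hP hxbig
    refine Set.mem_iUnion.2 ⟨Nat.find hP - 1, ?_⟩
    rw [hEdef]
    simp only
    rw [if_pos (by omega)]
    constructor
    · have hone : Nat.find hP - 1 + 1 = Nat.find hP := by omega
      rw [hone]
      exact Nat.find_spec hP
    · exact Nat.find_min hP (by omega)
  -- part (ii) total
  have hpartii : ∫⁻ x in R.dil (2 ^ (d + 2)) \ Q₀.dil 2,
      ENNReal.ofReal |trunc μ k ε a x| ∂μ ≤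
        ENNReal.ofReal (Ck * 8 ^ n * (1 + ((d : ℝ) + 3) * (C₀ * Real.sqrt d ^ n))) := by
    set s : ℕ → ℝ := fun m => (μ ((Q₀.pow2 m).set)).toReal / ((2 ^ m * Q₀.ℓ) ^ n) with hsdef
    have hs0 : ∀ m, 0 ≤ s m := fun m =>
      div_nonneg ENNReal.toReal_nonneg (by positivity)
    have hsB : ∀ m, s m ≤ C₀ * Real.sqrt d ^ n := fun m => Kterm_le hg hC₀.le hd Q₀ m
    set g : ℕ → ℝ≥0∞ := fun j =>
      if 1 ≤ j ∧ j ≤ N + d + 2 then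
        ENNReal.ofReal (Ck * 8 ^ n * s (j + 1)) * (ENNReal.ofReal K)⁻¹ else 0 with hgdef
    have hEbound : ∀ j, ∫⁻ x in E j, ENNReal.ofReal |trunc μ k ε a x| ∂μ ≤ g j := by
      intro j
      rw [hEdef, hgdef]
      simp only
      split
      · next h => exact hannulus j h.1
      · next h => simp
    have hKs : ∑ m ∈ Finset.Icc 1 N, s m = K - 1 := by
      rw [hKdef]
      unfold Kcoef
      rw [← hNdef]
      ring
    calc ∫⁻ x in R.dil (2 ^ (d + 2)) \ Q₀.dil 2, ENNReal.ofReal |trunc μ k ε a x| ∂μ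
        ≤ ∫⁻ x, ENNReal.ofReal |trunc μ k ε a x|
            ∂(Measure.sum fun j => μ.restrict (E j)) :=
          lintegral_mono'
            (le_trans (Measure.restrict_mono hcov le_rfl) Measure.restrict_iUnion_le) le_rfl
      _ = ∑' j, ∫⁻ x in E j, ENNReal.ofReal |trunc μ k ε a x| ∂μ :=
          lintegral_sum_measure _ _
      _ ≤ ∑' j, g j := ENNReal.tsum_le_tsum hEbound
      _ = ∑ j ∈ Finset.Icc 1 (N + d + 2), g j := by
          refine tsum_eq_sum fun j hj => ?_
          rw [hgdef]
          simp only
          rw [if_neg]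
          intro hc
          exact hj (Finset.mem_Icc.2 hc)
      _ = (∑ j ∈ Finset.Icc 1 (N + d + 2), ENNReal.ofReal (Ck * 8 ^ n * s (j + 1))) *
            (ENNReal.ofReal K)⁻¹ := by
          rw [Finset.sum_mul]
          refine Finset.sum_congr rfl fun j hj => ?_
          rw [hgdef]
          simp only
          rw [if_pos (Finset.mem_Icc.1 hj)]
      _ = ENNReal.ofReal (∑ j ∈ Finset.Icc 1 (N + d + 2), Ck * 8 ^ n * s (j + 1)) *
            (ENNReal.ofReal K)⁻¹ := by
          rw [ENNReal.ofReal_sum_of_nonneg fun j _ =>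
            mul_nonneg (by positivity) (hs0 (j + 1))]
      _ ≤ ENNReal.ofReal ((Ck * 8 ^ n * (1 + ((d : ℝ) + 3) * (C₀ * Real.sqrt d ^ n))) * K) *
            (ENNReal.ofReal K)⁻¹ := by
          refine mul_le_mul_left (ENNReal.ofReal_le_ofReal ?_) _
          rw [← Finset.mul_sum]
          have hshift := sum_shift_le s hs0 N (d + 2) (C₀ * Real.sqrt d ^ n) hsB
          rw [hKs] at hshift
          have hB0 : 0 ≤ C₀ * Real.sqrt d ^ n := by positivity
          have hcast : ((d + 2 : ℕ) : ℝ) + 1 = (d : ℝ) + 3 := by push_cast; ring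
          rw [hcast] at hshift
          have h8 : (0:ℝ) ≤ Ck * 8 ^ n := by positivity
          have hfin : K - 1 + ((d : ℝ) + 3) * (C₀ * Real.sqrt d ^ n) ≤
              (1 + ((d : ℝ) + 3) * (C₀ * Real.sqrt d ^ n)) * K := by
            nlinarith [mul_nonneg (mul_nonneg (by positivity : (0:ℝ) ≤ (d:ℝ)+3) hB0) (sub_nonneg.2 hK1)]
          calc Ck * 8 ^ n * ∑ j ∈ Finset.Icc 1 (N + (d + 2)), s (j + 1)
              ≤ Ck * 8 ^ n * (K - 1 + ((d : ℝ) + 3) * (C₀ * Real.sqrt d ^ n)) :=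
                mul_le_mul_of_nonneg_left hshift h8
            _ ≤ Ck * 8 ^ n * ((1 + ((d : ℝ) + 3) * (C₀ * Real.sqrt d ^ n)) * K) :=
                mul_le_mul_of_nonneg_left hfin h8
            _ = Ck * 8 ^ n * (1 + ((d : ℝ) + 3) * (C₀ * Real.sqrt d ^ n)) * K := by ring
      _ = ENNReal.ofReal (Ck * 8 ^ n * (1 + ((d : ℝ) + 3) * (C₀ * Real.sqrt d ^ n))) := by
          rw [ENNReal.ofReal_mul (by positivity), mul_assoc,
            ENNReal.mul_inv_cancel hKne0 ENNReal.ofReal_ne_top, mul_one]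
  -- combine
  have hNearSplit : R.dil (2 ^ (d + 2)) ⊆ Q₀.dil 2 ∪ (R.dil (2 ^ (d + 2)) \ Q₀.dil 2) := by
    intro x hx
    by_cases hc : x ∈ Q₀.dil 2
    · exact Or.inl hc
    · exact Or.inr ⟨hx, hc⟩
  refine le_trans (lintegral_set_split _ hNearSplit) ?_
  rw [nearConst, ← hMdef, ENNReal.ofReal_add (by positivity) (by positivity)]
  exact add_le_add hparti hpartii

end AuxTolsaD
noncomputable section AuxTolsaE

open MeasureTheory Metric Set Function
open scoped Classical ENNReal NNReal BigOperators

variable {d : ℕ} {μ : MeasureTheory.Measure (Euc d)} {k : Euc d → Euc d → ℝ}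

lemma ofReal_abs_tsum_le (f : ℕ → ℝ) :
    ENNReal.ofReal |∑' j, f j| ≤ ∑' j, ENNReal.ofReal |f j| := by
  by_cases hs : Summable f
  · have habs : Summable fun j => |f j| := hs.abs
    have h1 : |∑' j, f j| ≤ ∑' j, |f j| := by
      have h := norm_tsum_le_tsum_norm (f := f) (by simpa using habs)
      simpa using h
    refine le_trans (ENNReal.ofReal_le_ofReal h1) (le_of_eq ?_)
    exact ENNReal.ofReal_tsum_of_nonneg (fun j => abs_nonneg _) habs
  · rw [tsum_eq_zero_of_not_summable hs]
    simp

lemma lintegral_kernel_region_le {ε : ℝ} (x : Euc d) {g : Euc d → ℝ} {κ : ℝ}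
    (hb : ∀ y, ε < dist x y → g y ≠ 0 → |k x y| ≤ κ) :
    ∫⁻ y in {y | ε < dist x y}, ‖k x y * g y‖₊ ∂μ ≤
      ENNReal.ofReal κ * ∫⁻ y, ENNReal.ofReal |g y| ∂μ := by
  have h0 : ∫⁻ y in {y | ε < dist x y}, (‖k x y * g y‖₊ : ℝ≥0∞) ∂μ =
      ∫⁻ y in {y | ε < dist x y}, ENNReal.ofReal |k x y| * ENNReal.ofReal |g y| ∂μ := by
    refine lintegral_congr fun y => ?_
    rw [← enorm_eq_nnnorm, Real.enorm_eq_ofReal_abs, abs_mul, ENNReal.ofReal_mul (abs_nonneg _)]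
  rw [h0]
  have h1 : ∫⁻ y in {y | ε < dist x y},
      ENNReal.ofReal |k x y| * ENNReal.ofReal |g y| ∂μ ≤
        ∫⁻ y in {y | ε < dist x y}, ENNReal.ofReal κ * ENNReal.ofReal |g y| ∂μ := by
    refine lintegral_mono_ae ?_
    rw [ae_restrict_iff' (measurableSet_truncRegion x ε)]
    refine ae_of_all _ fun y hy => ?_
    by_cases h : g y = 0
    · simp [h]
    · exact mul_le_mul_left (ENNReal.ofReal_le_ofReal (hb y hy h)) _
  refine le_trans h1 ?_
  rw [lintegral_const_mul' _ _ ENNReal.ofReal_ne_top]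
  exact mul_le_mul_right (setLIntegral_le_lintegral _ _) _

/-- `L¹` bound for an atom. -/
lemma atom_L1 {n : ℕ} {C₀ : ℝ} (hd : 1 ≤ d) (hg : GrowthBound μ n C₀)
    (Q₀ R : CubeOf μ) (a : Euc d → ℝ) (ha0 : ∀ y ∉ Q₀.set, a y = 0)
    (hab : MeasureTheory.eLpNorm a ⊤ μ ≤
      (μ (Q₀.dil 2) * ENNReal.ofReal (Kcoef n Q₀ R))⁻¹) :
    ∫⁻ y, ENNReal.ofReal |a y| ∂μ ≤ 1 := by
  have hK1 : 1 ≤ Kcoef n Q₀ R := one_le_Kcoef n Q₀ R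
  have hKenn : (1:ℝ≥0∞) ≤ ENNReal.ofReal (Kcoef n Q₀ R) := ENNReal.one_le_ofReal.2 hK1
  have hμ2pos : 0 < μ (Q₀.dil 2) := Q₀.measure_dil_pos one_le_two
  have hμ2top : μ (Q₀.dil 2) < ⊤ := Q₀.measure_dil_lt_top hg hd 2
  have hVμ2 : (μ (Q₀.dil 2) * ENNReal.ofReal (Kcoef n Q₀ R))⁻¹ * μ (Q₀.dil 2) =
      (ENNReal.ofReal (Kcoef n Q₀ R))⁻¹ := enn_cancel hμ2pos.ne' hμ2top.ne
  have haV : ∀ᵐ y ∂μ, ENNReal.ofReal |a y| ≤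
      (μ (Q₀.dil 2) * ENNReal.ofReal (Kcoef n Q₀ R))⁻¹ := by
    filter_upwards [ae_le_eLpNormEssSup (f := a) (μ := μ)] with y hy
    rw [← Real.enorm_eq_ofReal_abs]
    exact le_trans hy (le_trans (le_of_eq eLpNorm_exponent_top.symm) hab)
  calc ∫⁻ y, ENNReal.ofReal |a y| ∂μ
      ≤ (μ (Q₀.dil 2) * ENNReal.ofReal (Kcoef n Q₀ R))⁻¹ * μ Q₀.set :=
        lintegral_abs_le_of_supp Q₀.measurableSet_set ha0 haV
    _ ≤ (μ (Q₀.dil 2) * ENNReal.ofReal (Kcoef n Q₀ R))⁻¹ * μ (Q₀.dil 2) :=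
        mul_le_mul_right (measure_mono (Q₀.set_subset_dil one_le_two)) _
    _ = (ENNReal.ofReal (Kcoef n Q₀ R))⁻¹ := hVμ2
    _ ≤ 1 := ENNReal.inv_le_one.2 hKenn

/-- `L¹` bound for an atomic block. -/
lemma block_L1 {n : ℕ} {C₀ : ℝ} (hd : 1 ≤ d) (hg : GrowthBound μ n C₀)
    (B : AtomicBlock μ n) :
    ∫⁻ y, ENNReal.ofReal |B.b y| ∂μ ≤ ENNReal.ofReal B.size := by
  have hpt : ∀ᵐ y ∂μ, ENNReal.ofReal |B.b y| ≤
      ∑' j, ENNReal.ofReal |B.lam j| * ENNReal.ofReal |B.a j y| := by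
    filter_upwards [B.b_eq] with y hy
    rw [← hy.tsum_eq]
    refine le_trans (ofReal_abs_tsum_le _) (le_of_eq ?_)
    congr 1
    funext j
    rw [abs_mul, ENNReal.ofReal_mul (abs_nonneg _)]
  calc ∫⁻ y, ENNReal.ofReal |B.b y| ∂μ
      ≤ ∫⁻ y, ∑' j, ENNReal.ofReal |B.lam j| * ENNReal.ofReal |B.a j y| ∂μ :=
        lintegral_mono_ae hpt
    _ = ∑' j, ∫⁻ y, ENNReal.ofReal |B.lam j| * ENNReal.ofReal |B.a j y| ∂μ := by
        refine lintegral_tsum fun j => ?_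
        exact ((measurable_id.abs.ennreal_ofReal).comp_aemeasurable
          (B.a_meas j).aemeasurable).const_mul _
    _ = ∑' j, ENNReal.ofReal |B.lam j| * ∫⁻ y, ENNReal.ofReal |B.a j y| ∂μ := by
        congr 1
        funext j
        rw [lintegral_const_mul' _ _ ENNReal.ofReal_ne_top]
    _ ≤ ∑' j, ENNReal.ofReal |B.lam j| * 1 :=
        ENNReal.tsum_le_tsum fun j => mul_le_mul_right
          (atom_L1 hd hg (B.Qj j) B.R (B.a j) (B.a_supp j) (B.a_bound j)) _
    _ = ENNReal.ofReal B.size := by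
        simp only [mul_one]
        rw [AtomicBlock.size, ENNReal.ofReal_tsum_of_nonneg (fun j => abs_nonneg _)
          B.lam_summable]

/-- far-field constant, smoothness part -/
def farC1 (n : ℕ) (C₀ Ck δ : ℝ) : ℝ :=
  Ck * (4 / 3) ^ (n + 1) * (C₀ * 2 ^ n * (1 - ((2:ℝ)⁻¹) ^ δ)⁻¹)

/-- far-field constant, truncation part -/
def farC2 (n : ℕ) (C₀ Ck : ℝ) : ℝ := Ck * C₀ * 2 ^ n

/-- the final block constant -/
def finalC (d n : ℕ) (C₀ Ck δ ρ A : ℝ) : ℝ :=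
  nearConst d n C₀ Ck ρ A + farC1 n C₀ Ck δ + farC2 n C₀ Ck

lemma inv_one_sub_q_nonneg {δ : ℝ} (hδ : 0 < δ) : (0:ℝ) ≤ (1 - ((2:ℝ)⁻¹) ^ δ)⁻¹ := by
  have hq1 : ((2:ℝ)⁻¹) ^ δ < 1 := Real.rpow_lt_one (by norm_num) (by norm_num) hδ
  rw [inv_nonneg]
  linarith

lemma farC1_nonneg {n : ℕ} {C₀ Ck δ : ℝ} (hC₀ : 0 ≤ C₀) (hCk : 0 ≤ Ck) (hδ : 0 < δ) :
    0 ≤ farC1 n C₀ Ck δ := by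
  have h2 := inv_one_sub_q_nonneg hδ
  unfold farC1
  positivity

lemma finalC_nonneg {d n : ℕ} {C₀ Ck δ ρ A : ℝ} (hC₀ : 0 ≤ C₀) (hCk : 0 ≤ Ck)
    (hδ : 0 < δ) : 0 ≤ finalC d n C₀ Ck δ ρ A := by
  have h1 := nearConst_nonneg (d := d) (n := n) (ρ := ρ) (A := A) hC₀ hCk
  have h2 := farC1_nonneg (n := n) hC₀ hCk hδ
  have h3 : 0 ≤ farC2 n C₀ Ck := by unfold farC2; positivity
  unfold finalC
  linarith


set_option maxHeartbeats 2000000 in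
/-- The full block estimate. -/
lemma block_estimate {n : ℕ} {C₀ Ck δ ρ A : ℝ} (hd : 1 ≤ d)
    (hC₀ : 0 < C₀) (hCk : 0 ≤ Ck) (hδ : 0 < δ) (hδ1 : δ ≤ 1) (hρ : 1 < ρ)
    (hg : GrowthBound μ n C₀)
    (hk : Measurable (Function.uncurry k)) (hCZ : CZKernelBound n k Ck δ)
    (hT : ∀ (Q : CubeOf μ) (a : Euc d → ℝ), MeasureTheory.MemLp a ⊤ μ →
      (∀ x ∉ Q.set, a x = 0) → ∀ ε : ℝ, 0 < ε →
        ∫⁻ x in Q.set, ENNReal.ofReal |trunc μ k ε a x| ∂μ ≤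
          ENNReal.ofReal A * (MeasureTheory.eLpNorm a ⊤ μ * μ (Q.dil ρ)))
    (B : AtomicBlock μ n) {ε : ℝ} (hε : 0 < ε) :
    ∫⁻ x, ENNReal.ofReal |trunc μ k ε B.b x| ∂μ ≤
      ENNReal.ofReal (finalC d n C₀ Ck δ ρ A * B.size) := by
  haveI : SigmaFinite μ := sigmaFinite_of_growth hg
  have hsd0 : (0:ℝ) ≤ Real.sqrt d := Real.sqrt_nonneg _
  have hlR := B.R.ℓ_pos
  have hsize0 : 0 ≤ B.size := tsum_nonneg fun j => abs_nonneg _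
  set W : ℝ := (2:ℝ) ^ (d + 2) with hWdef
  have hW1 : (1:ℝ) ≤ W := by rw [hWdef]; exact one_le_pow₀ (by norm_num)
  have hWpos : (0:ℝ) < W := by linarith
  have h1d : (1:ℝ) ≤ (d:ℝ) := by exact_mod_cast hd
  have hsdd : Real.sqrt d ≤ (d:ℝ) := by
    have h := Real.sqrt_le_sqrt (show (d:ℝ) ≤ (d:ℝ) ^ 2 by nlinarith)
    rwa [Real.sqrt_sq (by positivity)] at h
  have hd2 : (d:ℝ) ≤ 2 ^ d := by
    have := (Nat.lt_two_pow_self (n := d)).le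
    exact_mod_cast this
  have hW4 : 4 * Real.sqrt d ≤ W := by
    have he : W = 4 * 2 ^ d := by rw [hWdef, pow_add]; ring
    rw [he]
    nlinarith
  set B1 : ℝ≥0∞ := ∫⁻ y, ENNReal.ofReal |B.b y| ∂μ with hB1def
  have hB1 : B1 ≤ ENNReal.ofReal B.size := block_L1 hd hg B
  have hB1top : B1 ≠ ⊤ := (lt_of_le_of_lt hB1 ENNReal.ofReal_lt_top).ne
  set z : Euc d := B.R.c with hzdef
  set l : ℝ := B.R.ℓ with hldef
  have hkx : ∀ x : Euc d, Measurable fun y => k x y := fun x =>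
    hk.comp measurable_prodMk_left
  have hfar_dist : ∀ x ∉ B.R.dil W, W * l / 2 ≤ dist x z := by
    intro x hx
    have h' : ¬ ∀ i, |x i - B.R.c i| ≤ W * B.R.ℓ / 2 := hx
    push_neg at h'
    obtain ⟨i, hi⟩ := h'
    exact le_trans (le_of_lt hi) (euc_coord_le_dist x z i)
  have hfar_quarter : ∀ x ∉ B.R.dil W, Real.sqrt d * l / 2 ≤ dist x z / 4 := by
    intro x hx
    have h1 := hfar_dist x hx
    nlinarith [mul_nonneg (sub_nonneg.2 hW4) hlR.le]
  have hRz : ∀ y ∈ B.R.set, dist y z ≤ Real.sqrt d * l / 2 := by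
    intro y hy
    have h := euc_dist_le y z (r := l / 2) (by positivity) fun i => hy i
    calc dist y z ≤ Real.sqrt d * (l / 2) := h
      _ = Real.sqrt d * l / 2 := by ring
  -- near part
  have hnear : ∫⁻ x in B.R.dil W, ENNReal.ofReal |trunc μ k ε B.b x| ∂μ ≤
      ENNReal.ofReal (nearConst d n C₀ Ck ρ A) * ENNReal.ofReal B.size := by
    have hptw : ∀ x, ENNReal.ofReal |trunc μ k ε B.b x| ≤
        ∑' j, ENNReal.ofReal |B.lam j| * ENNReal.ofReal |trunc μ k ε (B.a j) x| := by
      intro x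
      have hfj_meas : ∀ j, AEStronglyMeasurable
          (fun y => k x y * (B.lam j * B.a j y)) (μ.restrict {y | ε < dist x y}) :=
        fun j => ((hkx x).aestronglyMeasurable.mul ((B.a_meas j).const_mul _)).restrict
      have hfj_bound : ∀ j, ∫⁻ y in {y | ε < dist x y},
          ‖k x y * (B.lam j * B.a j y)‖₊ ∂μ ≤
            ENNReal.ofReal (Ck / ε ^ n) * ENNReal.ofReal |B.lam j| := by
        intro j
        refine le_trans (lintegral_kernel_region_le x (κ := Ck / ε ^ n) ?_) ?_
        · intro y hy _
          exact kernel_bound hCZ hCk hε hy.le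
        · refine mul_le_mul_right ?_ _
          have he : ∀ y, ENNReal.ofReal |B.lam j * B.a j y| =
              ENNReal.ofReal |B.lam j| * ENNReal.ofReal |B.a j y| := fun y => by
            rw [abs_mul, ENNReal.ofReal_mul (abs_nonneg _)]
          calc ∫⁻ y, ENNReal.ofReal |B.lam j * B.a j y| ∂μ
              = ENNReal.ofReal |B.lam j| * ∫⁻ y, ENNReal.ofReal |B.a j y| ∂μ := by
                rw [← lintegral_const_mul' _ _ ENNReal.ofReal_ne_top]
                exact lintegral_congr he
            _ ≤ ENNReal.ofReal |B.lam j| * 1 := mul_le_mul_right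
                (atom_L1 hd hg (B.Qj j) B.R (B.a j) (B.a_supp j) (B.a_bound j)) _
            _ = ENNReal.ofReal |B.lam j| := mul_one _
      have hfj_sum : ∑' j, ∫⁻ y in {y | ε < dist x y},
          ‖k x y * (B.lam j * B.a j y)‖₊ ∂μ ≠ ⊤ := by
        refine ne_top_of_le_ne_top ?_ (ENNReal.tsum_le_tsum hfj_bound)
        rw [ENNReal.tsum_mul_left]
        refine ENNReal.mul_ne_top ENNReal.ofReal_ne_top ?_
        rw [← ENNReal.ofReal_tsum_of_nonneg (fun j => abs_nonneg _) B.lam_summable]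
        exact ENNReal.ofReal_ne_top
      have heq : trunc μ k ε B.b x = ∑' j, B.lam j * trunc μ k ε (B.a j) x := by
        rw [trunc]
        have hcongr : ∫ y in {y | ε < dist x y}, k x y * B.b y ∂μ =
            ∫ y in {y | ε < dist x y}, (∑' j, k x y * (B.lam j * B.a j y)) ∂μ := by
          refine integral_congr_ae (ae_restrict_of_ae ?_)
          filter_upwards [B.b_eq] with y hy
          exact ((hy.mul_left (k x y)).tsum_eq).symm
        rw [hcongr, integral_tsum hfj_meas hfj_sum]
        congr 1
        funext j
        have hre : (fun y => k x y * (B.lam j * B.a j y)) =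
            fun y => B.lam j * (k x y * B.a j y) := by
          funext y
          ring
        rw [hre, integral_const_mul]
        rfl
      rw [heq]
      refine le_trans (ofReal_abs_tsum_le _) (le_of_eq ?_)
      congr 1
      funext j
      rw [abs_mul, ENNReal.ofReal_mul (abs_nonneg _)]
    calc ∫⁻ x in B.R.dil W, ENNReal.ofReal |trunc μ k ε B.b x| ∂μ
        ≤ ∫⁻ x in B.R.dil W, ∑' j, ENNReal.ofReal |B.lam j| *
            ENNReal.ofReal |trunc μ k ε (B.a j) x| ∂μ := lintegral_mono hptw
      _ = ∑' j, ∫⁻ x in B.R.dil W, ENNReal.ofReal |B.lam j| *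
            ENNReal.ofReal |trunc μ k ε (B.a j) x| ∂μ := by
          refine lintegral_tsum fun j => ?_
          exact ((measurable_ofReal_abs_trunc hk (B.a_meas j)).const_mul _).aemeasurable
      _ = ∑' j, ENNReal.ofReal |B.lam j| * ∫⁻ x in B.R.dil W,
            ENNReal.ofReal |trunc μ k ε (B.a j) x| ∂μ := by
          congr 1
          funext j
          rw [lintegral_const_mul' _ _ ENNReal.ofReal_ne_top]
      _ ≤ ∑' j, ENNReal.ofReal |B.lam j| * ENNReal.ofReal (nearConst d n C₀ Ck ρ A) := by
          refine ENNReal.tsum_le_tsum fun j => mul_le_mul_right ?_ _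
          exact atom_near hd hC₀ hCk hρ hg hk hCZ hT (B.Qj j) B.R (B.Qj_sub j)
            (B.a j) (B.a_supp j) (B.a_meas j) (B.a_bound j) hε
      _ = ENNReal.ofReal (nearConst d n C₀ Ck ρ A) * ENNReal.ofReal B.size := by
          rw [ENNReal.tsum_mul_right, ← ENNReal.ofReal_tsum_of_nonneg
            (fun j => abs_nonneg _) B.lam_summable, mul_comm]
          rfl
  -- far part, case 1
  set X₁ : Set (Euc d) := {x | ε < Metric.infDist x B.R.set} with hX₁def
  have hX₁meas : MeasurableSet X₁ :=
    (isOpen_lt continuous_const (Metric.continuous_infDist_pt _)).measurableSet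
  set c2 : ℝ := Ck * (4 / 3) ^ (n + 1) * (Real.sqrt d * l / 2) ^ δ with hc2def
  have hsnn : (0:ℝ) ≤ (Real.sqrt d * l / 2) ^ δ := Real.rpow_nonneg (by positivity) δ
  have hc2nonneg : 0 ≤ c2 := by
    rw [hc2def]
    positivity
  have hfar1 : ∫⁻ x in (B.R.dil W)ᶜ ∩ X₁, ENNReal.ofReal |trunc μ k ε B.b x| ∂μ ≤
      ENNReal.ofReal (farC1 n C₀ Ck δ) * B1 := by
    have hptw : ∀ x ∈ (B.R.dil W)ᶜ ∩ X₁, ENNReal.ofReal |trunc μ k ε B.b x| ≤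
        (ENNReal.ofReal c2 * B1) * ENNReal.ofReal (1 / dist x z ^ ((n : ℝ) + δ)) := by
      intro x hx
      have hxnear : x ∉ B.R.dil W := hx.1
      have hD : W * l / 2 ≤ dist x z := hfar_dist x hxnear
      have hD0 : (0:ℝ) < dist x z := lt_of_lt_of_le (by positivity) hD
      have hq : Real.sqrt d * l / 2 ≤ dist x z / 4 := hfar_quarter x hxnear
      have hdxy : ∀ y ∈ B.R.set, 3 / 4 * dist x z ≤ dist x y := by
        intro y hy
        have h1 := hRz y hy
        have h2 : dist x z ≤ dist x y + dist y z := dist_triangle x y z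
        linarith
      have hX : ∀ y ∈ B.R.set, ε < dist x y := fun y hy =>
        lt_of_lt_of_le hx.2 (Metric.infDist_le_dist_of_mem hy)
      have hzero : ∀ y ∉ {y : Euc d | ε < dist x y}, k x y * B.b y = 0 := by
        intro y hy
        have hyR : y ∉ B.R.set := fun hmem => hy (hX y hmem)
        rw [B.supp_b y hyR, mul_zero]
      have hIb : Integrable (fun y => k x y * B.b y) μ := by
        have hκpos : (0:ℝ) < 3 / 4 * dist x z := by positivity
        refine Integrable.mono' ((B.integrable.abs).const_mul (Ck / (3 / 4 * dist x z) ^ n))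
          ((hkx x).aestronglyMeasurable.mul B.integrable.aestronglyMeasurable)
          (ae_of_all _ fun y => ?_)
        by_cases hb0 : B.b y = 0
        · rw [hb0]
          simp only [mul_zero, norm_zero, abs_zero]
          positivity
        · have hyR : y ∈ B.R.set := by
            by_contra hq'
            exact hb0 (B.supp_b y hq')
          have hkb := kernel_bound hCZ hCk hκpos (hdxy y hyR)
          rw [Real.norm_eq_abs, abs_mul]
          exact mul_le_mul_of_nonneg_right hkb (abs_nonneg _)
      have htr : trunc μ k ε B.b x = ∫ y, (k x y - k x z) * B.b y ∂μ := by
        rw [trunc, setIntegral_eq_integral_of_forall_compl_eq_zero hzero]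
        have hsub : ∫ y, (k x y - k x z) * B.b y ∂μ =
            ∫ y, (k x y * B.b y - k x z * B.b y) ∂μ := by
          congr 1
          funext y
          ring
        rw [hsub, integral_sub hIb (B.integrable.const_mul _), integral_const_mul,
          B.int_zero, mul_zero, sub_zero]
      have hdiffb : ∀ y, ENNReal.ofReal |(k x y - k x z) * B.b y| ≤
          ENNReal.ofReal (c2 * (1 / dist x z ^ ((n : ℝ) + δ))) *
            ENNReal.ofReal |B.b y| := by
        intro y
        by_cases hb0 : B.b y = 0
        · simp [hb0]
        · have hyR : y ∈ B.R.set := by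
            by_contra hq'
            exact hb0 (B.supp_b y hq')
          have hyz := hRz y hyR
          have hxy34 := hdxy y hyR
          have hyx0 : (0:ℝ) < dist y x := by
            rw [dist_comm]
            linarith [hX y hyR, hε]
          have hyne : y ≠ x := fun h => by
            rw [h, dist_self] at hyx0
            linarith
          have hcond : dist y z ≤ dist y x / 2 := by
            rw [dist_comm y x]
            linarith
          have hCZ2 := hCZ.2 y z x hyne hcond
          have hone : |k x y - k x z| ≤
              Ck * dist y z ^ δ / dist y x ^ ((n : ℝ) + δ) :=
            le_trans (le_add_of_nonneg_left (abs_nonneg _)) hCZ2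
          have hnum : Ck * dist y z ^ δ ≤ Ck * (Real.sqrt d * l / 2) ^ δ :=
            mul_le_mul_of_nonneg_left (Real.rpow_le_rpow dist_nonneg hyz hδ.le) hCk
          have hden : (3 / 4 * dist x z) ^ ((n : ℝ) + δ) ≤ dist y x ^ ((n : ℝ) + δ) := by
            refine Real.rpow_le_rpow (by positivity) ?_ (by positivity)
            rw [dist_comm y x]
            exact hxy34
          have hdpos : (0:ℝ) < (3 / 4 * dist x z) ^ ((n : ℝ) + δ) :=
            Real.rpow_pos_of_pos (by positivity) _
          have htwo : |k x y - k x z| ≤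
              Ck * (Real.sqrt d * l / 2) ^ δ / (3 / 4 * dist x z) ^ ((n : ℝ) + δ) :=
            le_trans hone (div_le_div₀ (by positivity) hnum hdpos hden)
          have hDe : (0:ℝ) < dist x z ^ ((n : ℝ) + δ) := Real.rpow_pos_of_pos hD0 _
          have h34e : (0:ℝ) < ((3:ℝ) / 4) ^ ((n : ℝ) + δ) :=
            Real.rpow_pos_of_pos (by norm_num) _
          have hsplitr : ((3:ℝ) / 4 * dist x z) ^ ((n : ℝ) + δ) =
              ((3:ℝ) / 4) ^ ((n : ℝ) + δ) * dist x z ^ ((n : ℝ) + δ) :=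
            Real.mul_rpow (by norm_num) hD0.le
          have h43le : ((4:ℝ) / 3) ^ ((n : ℝ) + δ) ≤ ((4:ℝ) / 3) ^ (n + 1 : ℕ) := by
            rw [← Real.rpow_natCast ((4:ℝ) / 3) (n + 1)]
            refine Real.rpow_le_rpow_of_exponent_le (by norm_num) ?_
            push_cast
            linarith
          have hprod : ((4:ℝ) / 3) ^ ((n : ℝ) + δ) * ((3:ℝ) / 4) ^ ((n : ℝ) + δ) = 1 := by
            rw [← Real.mul_rpow (by norm_num) (by norm_num),
              show (4:ℝ) / 3 * (3 / 4) = 1 by norm_num, Real.one_rpow]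
          have hstep : Ck * (Real.sqrt d * l / 2) ^ δ / ((3:ℝ) / 4) ^ ((n : ℝ) + δ) ≤ c2 := by
            rw [div_le_iff₀ h34e, hc2def]
            calc Ck * (Real.sqrt d * l / 2) ^ δ
                = Ck * ((4:ℝ) / 3) ^ ((n : ℝ) + δ) * (Real.sqrt d * l / 2) ^ δ *
                    ((3:ℝ) / 4) ^ ((n : ℝ) + δ) := by
                  rw [show Ck * ((4:ℝ)/3) ^ ((n:ℝ)+δ) * (Real.sqrt d * l / 2) ^ δ *
                      ((3:ℝ)/4) ^ ((n:ℝ)+δ) =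
                      Ck * (Real.sqrt d * l / 2) ^ δ *
                        (((4:ℝ)/3) ^ ((n:ℝ)+δ) * ((3:ℝ)/4) ^ ((n:ℝ)+δ)) by ring,
                    hprod, mul_one]
              _ ≤ Ck * ((4:ℝ) / 3) ^ (n + 1 : ℕ) * (Real.sqrt d * l / 2) ^ δ *
                    ((3:ℝ) / 4) ^ ((n : ℝ) + δ) := by
                  refine mul_le_mul_of_nonneg_right (mul_le_mul_of_nonneg_right ?_ hsnn)
                    h34e.le
                  exact mul_le_mul_of_nonneg_left h43le hCk
          have hthree : Ck * (Real.sqrt d * l / 2) ^ δ /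
              ((3:ℝ) / 4 * dist x z) ^ ((n : ℝ) + δ) ≤
                c2 * (1 / dist x z ^ ((n : ℝ) + δ)) := by
            rw [hsplitr, ← div_div, mul_one_div]
            gcongr
          rw [abs_mul, ENNReal.ofReal_mul (abs_nonneg _)]
          exact mul_le_mul_left (ENNReal.ofReal_le_ofReal
            (le_trans htwo hthree)) _
      calc ENNReal.ofReal |trunc μ k ε B.b x|
          = ENNReal.ofReal |∫ y, (k x y - k x z) * B.b y ∂μ| := by rw [htr]
        _ ≤ ∫⁻ y, ENNReal.ofReal |(k x y - k x z) * B.b y| ∂μ := by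
            rw [← Real.enorm_eq_ofReal_abs]
            refine le_trans (enorm_integral_le_lintegral_enorm _)
              (lintegral_mono fun y => ?_)
            rw [Real.enorm_eq_ofReal_abs]
        _ ≤ ∫⁻ y, ENNReal.ofReal (c2 * (1 / dist x z ^ ((n : ℝ) + δ))) *
              ENNReal.ofReal |B.b y| ∂μ := lintegral_mono hdiffb
        _ = ENNReal.ofReal (c2 * (1 / dist x z ^ ((n : ℝ) + δ))) * B1 :=
            lintegral_const_mul' _ _ ENNReal.ofReal_ne_top
        _ = (ENNReal.ofReal c2 * B1) * ENNReal.ofReal (1 / dist x z ^ ((n : ℝ) + δ)) := by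
            rw [ENNReal.ofReal_mul hc2nonneg]
            ring
    have hsubann : (B.R.dil W)ᶜ ∩ X₁ ⊆ {x | W * l / 2 ≤ dist x z} :=
      fun x hx => hfar_dist x hx.1
    calc ∫⁻ x in (B.R.dil W)ᶜ ∩ X₁, ENNReal.ofReal |trunc μ k ε B.b x| ∂μ
        ≤ ∫⁻ x in (B.R.dil W)ᶜ ∩ X₁, (ENNReal.ofReal c2 * B1) *
            ENNReal.ofReal (1 / dist x z ^ ((n : ℝ) + δ)) ∂μ := by
          refine lintegral_mono_ae ?_
          rw [ae_restrict_iff' (((B.R.measurableSet_dil W).compl).inter hX₁meas)]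
          exact ae_of_all _ hptw
      _ = (ENNReal.ofReal c2 * B1) * ∫⁻ x in (B.R.dil W)ᶜ ∩ X₁,
            ENNReal.ofReal (1 / dist x z ^ ((n : ℝ) + δ)) ∂μ :=
          lintegral_const_mul' _ _ (ENNReal.mul_ne_top ENNReal.ofReal_ne_top hB1top)
      _ ≤ (ENNReal.ofReal c2 * B1) * ∫⁻ x in {x | W * l / 2 ≤ dist x z},
            ENNReal.ofReal (1 / dist x z ^ ((n : ℝ) + δ)) ∂μ :=
          mul_le_mul_right (lintegral_mono'
            (Measure.restrict_mono hsubann le_rfl) le_rfl) _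
      _ ≤ (ENNReal.ofReal c2 * B1) * ENNReal.ofReal
            (C₀ * 2 ^ n / (W * l / 2) ^ δ * (1 - ((2:ℝ)⁻¹) ^ δ)⁻¹) :=
          mul_le_mul_right (lintegral_annuli hg hC₀ hδ z (by positivity)) _
      _ ≤ ENNReal.ofReal (farC1 n C₀ Ck δ) * B1 := by
          have hsW : Real.sqrt d ≤ W := by linarith
          have hWl : (0:ℝ) < (W * l / 2) ^ δ := Real.rpow_pos_of_pos (by positivity) δ
          have hq0 := inv_one_sub_q_nonneg hδ
          have hratio : (Real.sqrt d * l / 2) ^ δ / (W * l / 2) ^ δ ≤ 1 := by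
            rw [← Real.div_rpow (by positivity) (by positivity)]
            refine Real.rpow_le_one (by positivity) ?_ hδ.le
            rw [div_le_one (by positivity)]
            nlinarith [mul_nonneg (sub_nonneg.2 hsW) hlR.le]
          have hreal : c2 * (C₀ * 2 ^ n / (W * l / 2) ^ δ * (1 - ((2:ℝ)⁻¹) ^ δ)⁻¹) ≤
              farC1 n C₀ Ck δ := by
            have hXeq : c2 * (C₀ * 2 ^ n / (W * l / 2) ^ δ * (1 - ((2:ℝ)⁻¹) ^ δ)⁻¹) =
                (Ck * (4 / 3) ^ (n + 1) * (C₀ * 2 ^ n * (1 - ((2:ℝ)⁻¹) ^ δ)⁻¹)) *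
                  ((Real.sqrt d * l / 2) ^ δ / (W * l / 2) ^ δ) := by
              rw [hc2def]
              field_simp
            rw [hXeq, farC1]
            refine mul_le_of_le_one_right ?_ hratio
            positivity
          calc (ENNReal.ofReal c2 * B1) * ENNReal.ofReal
                (C₀ * 2 ^ n / (W * l / 2) ^ δ * (1 - ((2:ℝ)⁻¹) ^ δ)⁻¹)
              = ENNReal.ofReal (c2 * (C₀ * 2 ^ n / (W * l / 2) ^ δ *
                  (1 - ((2:ℝ)⁻¹) ^ δ)⁻¹)) * B1 := by
                rw [ENNReal.ofReal_mul hc2nonneg]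
                ring
            _ ≤ ENNReal.ofReal (farC1 n C₀ Ck δ) * B1 :=
                mul_le_mul_left (ENNReal.ofReal_le_ofReal hreal) _
  -- far part, case 2
  have hfar2 : ∫⁻ x in (B.R.dil W)ᶜ ∩ X₁ᶜ, ENNReal.ofReal |trunc μ k ε B.b x| ∂μ ≤
      ENNReal.ofReal (farC2 n C₀ Ck) * B1 := by
    have hbd : Bornology.IsBounded B.R.set := by
      have h := B.R.dil_subset_ball hd one_pos
      rw [← B.R.set_eq_dil_one] at h
      exact Metric.isBounded_ball.subset h
    have hcomp : IsCompact B.R.set := isCompact_of_isClosed_isBounded B.R.isClosed_set hbd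
    have hne : B.R.set.Nonempty := ⟨B.R.c, B.R.mem_set_self⟩
    have hsubball : (B.R.dil W)ᶜ ∩ X₁ᶜ ⊆ Metric.ball z (2 * ε) := by
      intro x hx
      obtain ⟨y₁, hy₁R, hy₁d⟩ := hcomp.exists_infDist_eq_dist hne x
      have hinf : Metric.infDist x B.R.set ≤ ε := not_lt.1 hx.2
      have h1 : dist x y₁ ≤ ε := by rw [← hy₁d]; exact hinf
      have h2 : dist x z ≤ dist x y₁ + dist y₁ z := dist_triangle _ _ _
      have h3 := hRz y₁ hy₁R
      have h4 := hfar_quarter x hx.1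
      rw [Metric.mem_ball]
      have h5 : dist x z ≤ ε + dist x z / 4 := by linarith
      linarith
    have hptw : ∀ x, ENNReal.ofReal |trunc μ k ε B.b x| ≤
        ENNReal.ofReal (Ck / ε ^ n) * B1 := fun x =>
      trunc_pointwise_bound fun y hy _ => kernel_bound hCZ hCk hε hy.le
    calc ∫⁻ x in (B.R.dil W)ᶜ ∩ X₁ᶜ, ENNReal.ofReal |trunc μ k ε B.b x| ∂μ
        ≤ ∫⁻ _x in (B.R.dil W)ᶜ ∩ X₁ᶜ, ENNReal.ofReal (Ck / ε ^ n) * B1 ∂μ :=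
          lintegral_mono fun x => hptw x
      _ = ENNReal.ofReal (Ck / ε ^ n) * B1 * μ ((B.R.dil W)ᶜ ∩ X₁ᶜ) :=
          setLIntegral_const _ _
      _ ≤ ENNReal.ofReal (Ck / ε ^ n) * B1 * μ (Metric.ball z (2 * ε)) :=
          mul_le_mul_right (measure_mono hsubball) _
      _ ≤ ENNReal.ofReal (Ck / ε ^ n) * B1 * ENNReal.ofReal (C₀ * (2 * ε) ^ n) :=
          mul_le_mul_right (hg z _ (by linarith)) _
      _ = ENNReal.ofReal (Ck / ε ^ n * (C₀ * (2 * ε) ^ n)) * B1 := by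
          rw [ENNReal.ofReal_mul (show (0:ℝ) ≤ Ck / ε ^ n by positivity)]
          exact mul_right_comm _ _ _
      _ = ENNReal.ofReal (farC2 n C₀ Ck) * B1 := by
          congr 2
          rw [farC2, mul_pow]
          field_simp
  -- assemble
  have hcover1 : (Set.univ : Set (Euc d)) ⊆ B.R.dil W ∪ (B.R.dil W)ᶜ := by
    intro x _
    by_cases hc : x ∈ B.R.dil W
    · exact Or.inl hc
    · exact Or.inr hc
  have hcover2 : ((B.R.dil W)ᶜ : Set (Euc d)) ⊆
      ((B.R.dil W)ᶜ ∩ X₁) ∪ ((B.R.dil W)ᶜ ∩ X₁ᶜ) := by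
    intro x hx
    by_cases hc : x ∈ X₁
    · exact Or.inl ⟨hx, hc⟩
    · exact Or.inr ⟨hx, hc⟩
  have hC0 : 0 ≤ finalC d n C₀ Ck δ ρ A := finalC_nonneg hC₀.le hCk hδ
  calc ∫⁻ x, ENNReal.ofReal |trunc μ k ε B.b x| ∂μ
      = ∫⁻ x in Set.univ, ENNReal.ofReal |trunc μ k ε B.b x| ∂μ :=
        (setLIntegral_univ _).symm
    _ ≤ ∫⁻ x in B.R.dil W, ENNReal.ofReal |trunc μ k ε B.b x| ∂μ +
          ∫⁻ x in (B.R.dil W)ᶜ, ENNReal.ofReal |trunc μ k ε B.b x| ∂μ :=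
        lintegral_set_split _ hcover1
    _ ≤ ∫⁻ x in B.R.dil W, ENNReal.ofReal |trunc μ k ε B.b x| ∂μ +
          (∫⁻ x in (B.R.dil W)ᶜ ∩ X₁, ENNReal.ofReal |trunc μ k ε B.b x| ∂μ +
            ∫⁻ x in (B.R.dil W)ᶜ ∩ X₁ᶜ, ENNReal.ofReal |trunc μ k ε B.b x| ∂μ) :=
        add_le_add le_rfl (lintegral_set_split _ hcover2)
    _ ≤ ENNReal.ofReal (nearConst d n C₀ Ck ρ A) * ENNReal.ofReal B.size +
          (ENNReal.ofReal (farC1 n C₀ Ck δ) * B1 +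
            ENNReal.ofReal (farC2 n C₀ Ck) * B1) :=
        add_le_add hnear (add_le_add hfar1 hfar2)
    _ ≤ ENNReal.ofReal (nearConst d n C₀ Ck ρ A) * ENNReal.ofReal B.size +
          (ENNReal.ofReal (farC1 n C₀ Ck δ) * ENNReal.ofReal B.size +
            ENNReal.ofReal (farC2 n C₀ Ck) * ENNReal.ofReal B.size) :=
        add_le_add le_rfl (add_le_add (mul_le_mul_right hB1 _) (mul_le_mul_right hB1 _))
    _ = (ENNReal.ofReal (nearConst d n C₀ Ck ρ A) + ENNReal.ofReal (farC1 n C₀ Ck δ) +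
          ENNReal.ofReal (farC2 n C₀ Ck)) * ENNReal.ofReal B.size := by
        ring
    _ = ENNReal.ofReal (finalC d n C₀ Ck δ ρ A * B.size) := by
        have h1 := nearConst_nonneg (d := d) (n := n) (ρ := ρ) (A := A) hC₀.le hCk
        have h2 := farC1_nonneg (n := n) (C₀ := C₀) (Ck := Ck) hC₀.le hCk hδ
        have h3 : 0 ≤ farC2 n C₀ Ck := by unfold farC2; positivity
        rw [ENNReal.ofReal_mul (finalC_nonneg hC₀.le hCk hδ)]
        congr 1
        unfold finalC
        rw [ENNReal.ofReal_add (by linarith) h3, ENNReal.ofReal_add h1 h2]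

end AuxTolsaE
set_option maxHeartbeats 1000000 in
/-- Theorem 4.2: a Calderón–Zygmund operator satisfying the cube testing condition
is bounded from `H^{1,∞}_atb(μ)` into `L¹(μ)`, uniformly in the truncation `ε`. -/
theorem statement7 (d n : ℕ) (hn : 1 ≤ n) (hnd : n ≤ d) (C₀ Ck δ ρ A : ℝ)
    (hC₀ : 0 < C₀) (hδ : 0 < δ) (hδ1 : δ ≤ 1) (hρ : 1 < ρ) :
    ∃ C : ℝ, 0 < C ∧ ∀ μ : MeasureTheory.Measure (Euc d), GrowthBound μ n C₀ →
      ∀ k : Euc d → Euc d → ℝ, Measurable (Function.uncurry k) → CZKernelBound n k Ck δ →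
      (∀ (Q : CubeOf μ) (a : Euc d → ℝ), MeasureTheory.MemLp a ⊤ μ →
        (∀ x ∉ Q.set, a x = 0) → ∀ ε : ℝ, 0 < ε →
          ∫⁻ x in Q.set, ENNReal.ofReal |trunc μ k ε a x| ∂μ ≤
            ENNReal.ofReal A * (MeasureTheory.eLpNorm a ⊤ μ * μ (Q.dil ρ))) →
      (∀ (B : AtomicBlock μ n) (ε : ℝ), 0 < ε →
        ∫⁻ x, ENNReal.ofReal |trunc μ k ε B.b x| ∂μ ≤ ENNReal.ofReal (C * B.size)) ∧
      (∀ (f : Euc d → ℝ), MeasureTheory.Integrable f μ → ∀ ε : ℝ, 0 < ε →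
        ∫⁻ x, ENNReal.ofReal |trunc μ k ε f x| ∂μ ≤
          ENNReal.ofReal C * hatbNorm μ n f) := by
  classical
  have hd : 1 ≤ d := le_trans hn hnd
  have hfcabs : 0 ≤ finalC d n C₀ |Ck| δ ρ A :=
    finalC_nonneg hC₀.le (abs_nonneg Ck) hδ
  refine ⟨1 + finalC d n C₀ |Ck| δ ρ A, by linarith, ?_⟩
  intro μ hg k hk hCZ hT
  haveI : SigmaFinite μ := sigmaFinite_of_growth hg
  -- the kernel constant is nonnegative
  have hCk : 0 ≤ Ck := by
    have hi : Fin d := ⟨0, by omega⟩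
    set y : Euc d := EuclideanSpace.single hi (1:ℝ) with hydef
    have hyne : y ≠ 0 := by
      intro h
      have h1 : y hi = 0 := by rw [h]; rfl
      rw [hydef, EuclideanSpace.single_apply] at h1
      simp at h1
    have hk1 := hCZ.1 y 0 hyne
    have hdp : 0 < dist y (0 : Euc d) := dist_pos.2 hyne
    have hge : 0 ≤ Ck / dist y 0 ^ (n:ℝ) := le_trans (abs_nonneg _) hk1
    have hrp : 0 < dist y 0 ^ (n:ℝ) := Real.rpow_pos_of_pos hdp _
    by_contra hneg
    push_neg at hneg
    have := div_neg_of_neg_of_pos hneg hrp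
    linarith
  have habs : |Ck| = Ck := abs_of_nonneg hCk
  have hfc : 0 ≤ finalC d n C₀ Ck δ ρ A := finalC_nonneg hC₀.le hCk hδ
  have key : ∀ (B : AtomicBlock μ n) (ε : ℝ), 0 < ε →
      ∫⁻ x, ENNReal.ofReal |trunc μ k ε B.b x| ∂μ ≤
        ENNReal.ofReal (finalC d n C₀ Ck δ ρ A * B.size) :=
    fun B ε hε => block_estimate hd hC₀ hCk hδ hδ1 hρ hg hk hCZ hT B hε
  constructor
  · intro B ε hε
    refine le_trans (key B ε hε) (ENNReal.ofReal_le_ofReal ?_)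
    have hsize0 : 0 ≤ B.size := tsum_nonneg fun j => abs_nonneg _
    rw [habs]
    nlinarith
  · intro f _hf ε hε
    have hCne0 : ENNReal.ofReal (1 + finalC d n C₀ |Ck| δ ρ A) ≠ 0 := by
      rw [Ne, ENNReal.ofReal_eq_zero, not_le]
      linarith
    have hbound : ∀ t ∈ {t : ℝ≥0∞ | ∃ B : ℕ → AtomicBlock μ n,
        (∀ᵐ x ∂μ, HasSum (fun i => (B i).b x) (f x)) ∧
        t = ∑' i, ENNReal.ofReal ((B i).size)},
        ∫⁻ x, ENNReal.ofReal |trunc μ k ε f x| ∂μ ≤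
          ENNReal.ofReal (1 + finalC d n C₀ |Ck| δ ρ A) * t := by
      rintro t ⟨B, hBsum, rfl⟩
      by_cases ht : (∑' i, ENNReal.ofReal ((B i).size)) = ⊤
      · rw [ht, ENNReal.mul_top hCne0]
        exact le_top
      · have hkx : ∀ x : Euc d, Measurable fun y => k x y := fun x =>
          hk.comp measurable_prodMk_left
        have hptw : ∀ x, ENNReal.ofReal |trunc μ k ε f x| ≤
            ∑' i, ENNReal.ofReal |trunc μ k ε (B i).b x| := by
          intro x
          have hfi_meas : ∀ i, AEStronglyMeasurable (fun y => k x y * (B i).b y)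
              (μ.restrict {y | ε < dist x y}) := fun i =>
            ((hkx x).aestronglyMeasurable.mul (B i).integrable.aestronglyMeasurable).restrict
          have hfi_bound : ∀ i, ∫⁻ y in {y | ε < dist x y}, ‖k x y * (B i).b y‖₊ ∂μ ≤
              ENNReal.ofReal (Ck / ε ^ n) * ENNReal.ofReal ((B i).size) := fun i =>
            le_trans (lintegral_kernel_region_le x (κ := Ck / ε ^ n)
              fun y hy _ => kernel_bound hCZ hCk hε hy.le)
              (mul_le_mul_right (block_L1 hd hg (B i)) _)
          have hfi_sum : ∑' i, ∫⁻ y in {y | ε < dist x y},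
              ‖k x y * (B i).b y‖₊ ∂μ ≠ ⊤ := by
            refine ne_top_of_le_ne_top ?_ (ENNReal.tsum_le_tsum hfi_bound)
            rw [ENNReal.tsum_mul_left]
            exact ENNReal.mul_ne_top ENNReal.ofReal_ne_top ht
          have heq : trunc μ k ε f x = ∑' i, trunc μ k ε (B i).b x := by
            rw [trunc]
            have hcongr : ∫ y in {y | ε < dist x y}, k x y * f y ∂μ =
                ∫ y in {y | ε < dist x y}, (∑' i, k x y * (B i).b y) ∂μ := by
              refine integral_congr_ae (ae_restrict_of_ae ?_)
              filter_upwards [hBsum] with y hy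
              exact ((hy.mul_left (k x y)).tsum_eq).symm
            rw [hcongr, integral_tsum hfi_meas hfi_sum]
            rfl
          rw [heq]
          exact ofReal_abs_tsum_le _
        calc ∫⁻ x, ENNReal.ofReal |trunc μ k ε f x| ∂μ
            ≤ ∫⁻ x, ∑' i, ENNReal.ofReal |trunc μ k ε (B i).b x| ∂μ :=
              lintegral_mono hptw
          _ = ∑' i, ∫⁻ x, ENNReal.ofReal |trunc μ k ε (B i).b x| ∂μ :=
              lintegral_tsum fun i => (measurable_ofReal_abs_trunc hk
                (B i).integrable.aestronglyMeasurable).aemeasurable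
          _ ≤ ∑' i, ENNReal.ofReal (finalC d n C₀ Ck δ ρ A * (B i).size) :=
              ENNReal.tsum_le_tsum fun i => key (B i) ε hε
          _ ≤ ENNReal.ofReal (1 + finalC d n C₀ |Ck| δ ρ A) *
                ∑' i, ENNReal.ofReal ((B i).size) := by
              rw [← ENNReal.tsum_mul_left]
              refine ENNReal.tsum_le_tsum fun i => ?_
              have hsize0 : 0 ≤ (B i).size := tsum_nonneg fun j => abs_nonneg _
              rw [← ENNReal.ofReal_mul (by rw [habs]; linarith)]
              refine ENNReal.ofReal_le_ofReal ?_
              rw [habs]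
              nlinarith
    rw [hatbNorm, sInf_eq_iInf', ENNReal.mul_iInf_of_ne hCne0 ENNReal.ofReal_ne_top]
    exact le_iInf fun t => hbound t.1 t.2
end

section
/- For a cube Q and f ∈ L¹_loc(μ), let α_Q(f) denote a real number at which the function α ↦ m_Q(|f − α|) attains its infimum. Let ‖f‖_∘ be the least constant C₁₀ such that μ(2Q)^{-1} ∫_Q |f − α_{Q̃}(f)| dμ ≤ C₁₀ for every cube Q, and |α_Q(f) − α_R(f)| ≤ C₁₀·K_{Q,R} for all doubling cubes Q ⊂ R. Then ‖·‖_∘ is a norm (on functions modulo additive constants) equivalent to ‖·‖_*: there is C ≥ 1, depending only on d, n, C₀, β_d, such that for any admissible choice of the minimizers α_Q(f), C^{-1}·‖f‖_* ≤ ‖f‖_∘ ≤ C·‖f‖_* for all f ∈ L¹_loc(μ). -/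
/-!
Common definitions for formalizing Tolsa, "BMO, H¹, and Calderón–Zygmund
operators for non doubling measures".
-/

open MeasureTheory Metric Set Function
open scoped Classical
open scoped ENNReal NNReal BigOperators

namespace Statement10Aux

open MeasureTheory

variable {d n : ℕ} {C₀ βd : ℝ} {μ : MeasureTheory.Measure (Euc d)} {f : Euc d → ℝ}

/-- An axis-parallel box. -/
def box (c : Euc d) (r : ℝ) : Set (Euc d) := {y | ∀ i, |y i - c i| ≤ r}

lemma set_eq_box (Q : CubeOf μ) : Q.set = box Q.c (Q.ℓ / 2) := rfl

lemma dil_eq_box (Q : CubeOf μ) (a : ℝ) : Q.dil a = box Q.c (a * Q.ℓ / 2) := rfl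

lemma pow2_set_eq (Q : CubeOf μ) (k : ℕ) :
    (Q.pow2 k).set = box Q.c ((2 : ℝ) ^ k * Q.ℓ / 2) := rfl

lemma box_mono (c : Euc d) {r r' : ℝ} (h : r ≤ r') : box c r ⊆ box c r' :=
  fun y hy i => (hy i).trans h

lemma box_subset_closedBall (c : Euc d) {r : ℝ} (hr : 0 ≤ r) :
    box c r ⊆ Metric.closedBall c (r * Real.sqrt d) := by
  intro y hy
  have h2 : ∑ i, dist (y i) (c i) ^ 2 ≤ (d : ℝ) * r ^ 2 := by
    calc ∑ i, dist (y i) (c i) ^ 2 ≤ ∑ _i : Fin d, r ^ 2 := by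
          refine Finset.sum_le_sum fun i _ => ?_
          have h := hy i
          rw [Real.dist_eq]
          exact pow_le_pow_left₀ (abs_nonneg _) h 2
      _ = (d : ℝ) * r ^ 2 := by simp [Finset.card_univ]
  have h3 : dist y c ≤ Real.sqrt ((d : ℝ) * r ^ 2) := by
    rw [EuclideanSpace.dist_eq]
    exact Real.sqrt_le_sqrt h2
  have h4 : Real.sqrt ((d : ℝ) * r ^ 2) = r * Real.sqrt d := by
    rw [Real.sqrt_mul (Nat.cast_nonneg d), Real.sqrt_sq hr]; ring
  exact Metric.mem_closedBall.mpr (h4 ▸ h3)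

lemma ball_subset_box (c : Euc d) (r : ℝ) : Metric.ball c r ⊆ box c r := by
  intro y hy i
  have h1 : dist (y i) (c i) ^ 2 ≤ ∑ j, dist (y j) (c j) ^ 2 :=
    Finset.single_le_sum (f := fun j => dist (y j) (c j) ^ 2)
      (fun j _ => sq_nonneg _) (Finset.mem_univ i)
  have h2 : dist (y i) (c i) ≤ dist y c := by
    calc dist (y i) (c i) = Real.sqrt (dist (y i) (c i) ^ 2) := (Real.sqrt_sq dist_nonneg).symm
      _ ≤ Real.sqrt (∑ j, dist (y j) (c j) ^ 2) := Real.sqrt_le_sqrt h1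
      _ = dist y c := (EuclideanSpace.dist_eq y c).symm
  rw [← Real.dist_eq]
  exact h2.trans (Metric.mem_ball.mp hy).le

lemma isClosed_box (c : Euc d) (r : ℝ) : IsClosed (box c r) := by
  have h : box c r = ⋂ i, {y : Euc d | |y i - c i| ≤ r} := by
    ext y; simp [box, Set.mem_iInter]
  rw [h]
  refine isClosed_iInter fun i => ?_
  have hcont : Continuous fun y : Euc d => |y i - c i| :=
    ((EuclideanSpace.proj (𝕜 := ℝ) i).continuous.sub continuous_const).abs
  exact isClosed_le hcont continuous_const

lemma box_lt_top (hg : GrowthBound μ n C₀) (c : Euc d) {r : ℝ} (hr : 0 ≤ r) :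
    μ (box c r) < ⊤ := by
  have hrs : 0 ≤ r * Real.sqrt d := mul_nonneg hr (Real.sqrt_nonneg _)
  have hsub : box c r ⊆ Metric.ball c (r * Real.sqrt d + 1) :=
    (box_subset_closedBall c hr).trans (Metric.closedBall_subset_ball (by linarith))
  exact lt_of_le_of_lt ((measure_mono hsub).trans (hg c _ (by linarith)))
    ENNReal.ofReal_lt_top

lemma cube_pos (Q : CubeOf μ) : 0 < μ Q.set :=
  lt_of_lt_of_le (Q.c_mem (Q.ℓ / 2) (by have := Q.ℓ_pos; linarith))
    (measure_mono (ball_subset_box Q.c (Q.ℓ / 2)))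

lemma cube_lt_top (hg : GrowthBound μ n C₀) (Q : CubeOf μ) : μ Q.set < ⊤ := by
  rw [set_eq_box]; exact box_lt_top hg _ (by have := Q.ℓ_pos; linarith)

lemma dil_lt_top (hg : GrowthBound μ n C₀) (Q : CubeOf μ) {a : ℝ} (ha : 0 ≤ a) :
    μ (Q.dil a) < ⊤ := by
  rw [dil_eq_box]
  exact box_lt_top hg _ (by have := Q.ℓ_pos; positivity)

lemma set_subset_dil2 (Q : CubeOf μ) : Q.set ⊆ Q.dil 2 := by
  rw [set_eq_box, dil_eq_box]
  exact box_mono _ (by have := Q.ℓ_pos; linarith)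

lemma dil2_pos (Q : CubeOf μ) : 0 < μ (Q.dil 2) :=
  lt_of_lt_of_le (cube_pos Q) (measure_mono (set_subset_dil2 Q))

lemma Kcoef_ge_one (n : ℕ) (Q R : CubeOf μ) : 1 ≤ Kcoef n Q R := by
  unfold Kcoef
  have h : 0 ≤ ∑ k ∈ Finset.Icc 1 (NQR Q R),
      (μ ((Q.pow2 k).set)).toReal / ((2 ^ k * Q.ℓ) ^ n) :=
    Finset.sum_nonneg fun k _ => div_nonneg ENNReal.toReal_nonneg
      (by have := Q.ℓ_pos; positivity)
  linarith

lemma exists_doubling (hg : GrowthBound μ n C₀) (hC₀ : 0 < C₀)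
    (hβ : (2 : ℝ) ^ n < βd) (Q : CubeOf μ) :
    ∃ N, IsDoubling μ 2 βd (Q.pow2 N) := by
  by_contra hcon
  push_neg at hcon
  have hβ0 : (0 : ℝ) < βd := lt_trans (by positivity) hβ
  have hℓ := Q.ℓ_pos
  have hs : (0 : ℝ) ≤ Real.sqrt d := Real.sqrt_nonneg _
  -- lower bound by iterated non-doubling
  have key : ∀ K : ℕ, (ENNReal.ofReal βd) ^ K * μ Q.set ≤ μ ((Q.pow2 K).set) := by
    intro K
    induction K with
    | zero =>
        have h0 : (Q.pow2 0).set = Q.set := by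
          rw [pow2_set_eq, set_eq_box]; norm_num
        rw [h0, pow_zero, one_mul]
    | succ K ih =>
        have hlt : ENNReal.ofReal βd * μ ((Q.pow2 K).set) < μ ((Q.pow2 K).dil 2) :=
          lt_of_not_ge (hcon K)
        have hdil : (Q.pow2 K).dil 2 = (Q.pow2 (K + 1)).set := by
          rw [dil_eq_box, pow2_set_eq]
          show box Q.c (2 * ((2:ℝ)^K * Q.ℓ) / 2) = box Q.c ((2:ℝ)^(K+1) * Q.ℓ / 2)
          congr 1; ring
        calc (ENNReal.ofReal βd) ^ (K + 1) * μ Q.set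
            = ENNReal.ofReal βd * ((ENNReal.ofReal βd) ^ K * μ Q.set) := by ring
          _ ≤ ENNReal.ofReal βd * μ ((Q.pow2 K).set) := mul_le_mul_right ih _
          _ ≤ μ ((Q.pow2 K).dil 2) := hlt.le
          _ = μ ((Q.pow2 (K + 1)).set) := by rw [hdil]
  set A : ℝ := C₀ * (Q.ℓ * Real.sqrt d + 1) ^ n with hA
  have hA0 : 0 < A := by positivity
  set m0 : ℝ := (μ Q.set).toReal with hm0def
  have hm0 : 0 < m0 :=
    ENNReal.toReal_pos (cube_pos Q).ne' (cube_lt_top hg Q).ne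
  have hy : (1 : ℝ) < βd / 2 ^ n := (one_lt_div (by positivity)).mpr hβ
  obtain ⟨K, hK⟩ := pow_unbounded_of_one_lt (A / m0) hy
  -- upper bound at K
  have hsub : (Q.pow2 K).set ⊆ Metric.ball Q.c (2 ^ K * (Q.ℓ * Real.sqrt d + 1)) := by
    rw [pow2_set_eq]
    refine (box_subset_closedBall Q.c (by positivity)).trans
      (Metric.closedBall_subset_ball ?_)
    have h2K : (0 : ℝ) < 2 ^ K := by positivity
    have hls : (0 : ℝ) ≤ Q.ℓ * Real.sqrt d := by positivity
    nlinarith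
  have hup : μ ((Q.pow2 K).set) ≤
      ENNReal.ofReal (C₀ * (2 ^ K * (Q.ℓ * Real.sqrt d + 1)) ^ n) :=
    (measure_mono hsub).trans (hg Q.c _ (by positivity))
  have h1 : (ENNReal.ofReal βd) ^ K * μ Q.set ≤
      ENNReal.ofReal (C₀ * (2 ^ K * (Q.ℓ * Real.sqrt d + 1)) ^ n) := (key K).trans hup
  have h2 := ENNReal.toReal_mono ENNReal.ofReal_ne_top h1
  rw [ENNReal.toReal_mul, ENNReal.toReal_pow, ENNReal.toReal_ofReal hβ0.le,
    ENNReal.toReal_ofReal (by positivity)] at h2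
  have h3 : C₀ * (2 ^ K * (Q.ℓ * Real.sqrt d + 1)) ^ n = A * ((2 : ℝ) ^ n) ^ K := by
    rw [hA, mul_pow, ← pow_mul, mul_comm K n, pow_mul]; ring
  rw [h3] at h2
  rw [div_pow] at hK
  have h4 : A * ((2 : ℝ) ^ n) ^ K < βd ^ K * m0 := by
    have := (div_lt_div_iff₀ hm0 (by positivity : (0:ℝ) < ((2:ℝ)^n)^K)).mp hK
    linarith
  linarith

lemma tilde_doubling (hg : GrowthBound μ n C₀) (hC₀ : 0 < C₀)
    (hβ : (2 : ℝ) ^ n < βd) (Q : CubeOf μ) :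
    IsDoubling μ 2 βd (Q.tilde βd) :=
  Nat.sInf_mem (exists_doubling hg hC₀ hβ Q)

lemma cube_compact (Q : CubeOf μ) : IsCompact Q.set := by
  rw [set_eq_box]
  refine Metric.isCompact_of_isClosed_isBounded (isClosed_box _ _) ?_
  exact Metric.isBounded_closedBall.subset
    (box_subset_closedBall _ (by have := Q.ℓ_pos; linarith))

lemma integ_abs (hg : GrowthBound μ n C₀) (hf : MeasureTheory.LocallyIntegrable f μ)
    (Q : CubeOf μ) (a : ℝ) :
    MeasureTheory.IntegrableOn (fun x => |f x - a|) Q.set μ :=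
  ((hf.integrableOn_isCompact (cube_compact Q)).sub
    (integrableOn_const (cube_lt_top hg Q).ne)).abs

lemma lint_eq (hg : GrowthBound μ n C₀) (hf : MeasureTheory.LocallyIntegrable f μ)
    (Q : CubeOf μ) (a : ℝ) :
    ∫⁻ x in Q.set, ENNReal.ofReal |f x - a| ∂μ =
      ENNReal.ofReal (∫ x in Q.set, |f x - a| ∂μ) :=
  (MeasureTheory.ofReal_integral_eq_lintegral_ofReal (integ_abs hg hf Q a)
    (Filter.Eventually.of_forall fun x => abs_nonneg _)).symm

lemma I_nonneg (Q : CubeOf μ) (a : ℝ) : 0 ≤ ∫ x in Q.set, |f x - a| ∂μ :=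
  MeasureTheory.integral_nonneg fun x => abs_nonneg _

lemma I_triangle (hg : GrowthBound μ n C₀) (hf : MeasureTheory.LocallyIntegrable f μ)
    (Q : CubeOf μ) (a b : ℝ) :
    ∫ x in Q.set, |f x - a| ∂μ ≤
      (∫ x in Q.set, |f x - b| ∂μ) + |b - a| * (μ Q.set).toReal := by
  have hib : MeasureTheory.IntegrableOn (fun x => |f x - b|) Q.set μ := integ_abs hg hf Q b
  have hic : MeasureTheory.IntegrableOn (fun _ => |b - a|) Q.set μ :=
    integrableOn_const (cube_lt_top hg Q).ne
  calc ∫ x in Q.set, |f x - a| ∂μ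
      ≤ ∫ x in Q.set, (|f x - b| + |b - a|) ∂μ := by
        refine MeasureTheory.integral_mono (integ_abs hg hf Q a) (hib.add hic) fun x => ?_
        calc |f x - a| = |(f x - b) + (b - a)| := by ring_nf
          _ ≤ |f x - b| + |b - a| := abs_add_le _ _
    _ = (∫ x in Q.set, |f x - b| ∂μ) + ∫ _x in Q.set, |b - a| ∂μ :=
        MeasureTheory.integral_add hib hic
    _ = (∫ x in Q.set, |f x - b| ∂μ) + |b - a| * (μ Q.set).toReal := by
        rw [MeasureTheory.setIntegral_const, smul_eq_mul, MeasureTheory.measureReal_def]; ring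

lemma abs_mean_sub (hg : GrowthBound μ n C₀) (hf : MeasureTheory.LocallyIntegrable f μ)
    (Q : CubeOf μ) (a : ℝ) :
    |mQ μ Q f - a| ≤ (∫ x in Q.set, |f x - a| ∂μ) / (μ Q.set).toReal := by
  set m : ℝ := (μ Q.set).toReal with hm
  have hm0 : 0 < m := ENNReal.toReal_pos (cube_pos Q).ne' (cube_lt_top hg Q).ne
  have hint : MeasureTheory.IntegrableOn f Q.set μ :=
    hf.integrableOn_isCompact (cube_compact Q)
  have hic : MeasureTheory.IntegrableOn (fun _ => a) Q.set μ :=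
    integrableOn_const (cube_lt_top hg Q).ne
  have h1 : mQ μ Q f - a = m⁻¹ * ∫ x in Q.set, (f x - a) ∂μ := by
    rw [mQ, MeasureTheory.setAverage_eq, smul_eq_mul,
      MeasureTheory.integral_sub hint hic, MeasureTheory.setIntegral_const, smul_eq_mul]
    simp only [MeasureTheory.measureReal_def, ← hm]
    field_simp
  have h2 : |∫ x in Q.set, (f x - a) ∂μ| ≤ ∫ x in Q.set, |f x - a| ∂μ := by
    simpa [Real.norm_eq_abs] using
      norm_integral_le_integral_norm (μ := μ.restrict Q.set) (fun x => f x - a)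
  rw [h1, abs_mul, abs_inv, abs_of_pos hm0, div_eq_inv_mul]
  exact mul_le_mul_of_nonneg_left h2 (inv_nonneg.mpr hm0.le)

lemma dil2_toReal_le (hg : GrowthBound μ n C₀) {P : CubeOf μ} (hβ0 : 0 ≤ βd)
    (hP : IsDoubling μ 2 βd P) :
    (μ (P.dil 2)).toReal ≤ βd * (μ P.set).toReal := by
  have hne : (ENNReal.ofReal βd * μ P.set) ≠ ⊤ :=
    ENNReal.mul_ne_top ENNReal.ofReal_ne_top (cube_lt_top hg P).ne
  have h := ENNReal.toReal_mono hne hP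
  rwa [ENNReal.toReal_mul, ENNReal.toReal_ofReal hβ0] at h

lemma bridge (hg : GrowthBound μ n C₀) (hf : MeasureTheory.LocallyIntegrable f μ)
    (hβ0 : 0 ≤ βd) (αQ : CubeOf μ → ℝ)
    (hmin : ∀ (Q : CubeOf μ) (β : ℝ),
      (⨍ x in Q.set, |f x - αQ Q| ∂μ) ≤ ⨍ x in Q.set, |f x - β| ∂μ)
    (u : CubeOf μ → ℝ) {c : ℝ} (hc : 0 ≤ c)
    (hA : ∀ P : CubeOf μ,
      ∫ x in P.set, |f x - u (P.tilde βd)| ∂μ ≤ c * (μ (P.dil 2)).toReal)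
    (P : CubeOf μ) (hP : IsDoubling μ 2 βd P) :
    |mQ μ P f - αQ P| ≤ c * βd := by
  set m : ℝ := (μ P.set).toReal with hm
  have hm0 : 0 < m := ENNReal.toReal_pos (cube_pos P).ne' (cube_lt_top hg P).ne
  have h2 : (μ (P.dil 2)).toReal ≤ βd * m := dil2_toReal_le hg hβ0 hP
  have h3 := hmin P (u (P.tilde βd))
  rw [MeasureTheory.setAverage_eq, MeasureTheory.setAverage_eq, smul_eq_mul, smul_eq_mul] at h3
  have h4 : (∫ x in P.set, |f x - αQ P| ∂μ) / m ≤ (∫ x in P.set, |f x - u (P.tilde βd)| ∂μ) / m := by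
    rw [div_eq_inv_mul, div_eq_inv_mul]
    exact h3
  calc |mQ μ P f - αQ P| ≤ (∫ x in P.set, |f x - αQ P| ∂μ) / m := abs_mean_sub hg hf P _
    _ ≤ (∫ x in P.set, |f x - u (P.tilde βd)| ∂μ) / m := h4
    _ ≤ (c * (μ (P.dil 2)).toReal) / m := by gcongr; exact hA P
    _ ≤ (c * (βd * m)) / m := by gcongr
    _ = c * βd := by field_simp

lemma boundWith_top_i (Q : CubeOf μ) (g : Euc d → ℝ) :
    ∫⁻ x in Q.set, ENNReal.ofReal |g x| ∂μ ≤ ⊤ * μ (Q.dil 2) := by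
  rw [ENNReal.top_mul (dil2_pos Q).ne']; exact le_top

lemma boundWith_top_ii (Q R : CubeOf μ) (x : ℝ) :
    ENNReal.ofReal x ≤ ⊤ * ENNReal.ofReal (Kcoef n Q R) := by
  rw [ENNReal.top_mul (by
    exact (ENNReal.ofReal_pos.mpr (lt_of_lt_of_le one_pos (Kcoef_ge_one n Q R))).ne')]
  exact le_top

lemma sInf_le_mul_sInf {S T : Set ℝ≥0∞} {a : ℝ≥0∞} (ha0 : a ≠ 0) (hat : a ≠ ⊤)
    (h : ∀ b ∈ T, a * b ∈ S) : sInf S ≤ a * sInf T := by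
  rw [sInf_eq_iInf' T, ENNReal.mul_iInf_of_ne ha0 hat]
  exact le_iInf fun b => sInf_le (h b.1 b.2)

lemma unfold_i (hg : GrowthBound μ n C₀) (hf : MeasureTheory.LocallyIntegrable f μ)
    {C' : ℝ≥0∞} (hC' : C' ≠ ⊤) (g : CubeOf μ → ℝ)
    (h : ∀ Q : CubeOf μ, ∫⁻ x in Q.set, ENNReal.ofReal |f x - g Q| ∂μ ≤ C' * μ (Q.dil 2)) :
    ∀ Q : CubeOf μ, ∫ x in Q.set, |f x - g Q| ∂μ ≤ C'.toReal * (μ (Q.dil 2)).toReal := by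
  intro Q
  have h1 := h Q
  rw [lint_eq hg hf Q (g Q)] at h1
  have hm2 : μ (Q.dil 2) ≠ ⊤ := (dil_lt_top hg Q (by norm_num)).ne
  rw [← ENNReal.ofReal_toReal hC', ← ENNReal.ofReal_toReal hm2,
    ← ENNReal.ofReal_mul ENNReal.toReal_nonneg] at h1
  exact (ENNReal.ofReal_le_ofReal_iff
    (mul_nonneg ENNReal.toReal_nonneg ENNReal.toReal_nonneg)).mp h1

lemma unfold_ii {C' : ℝ≥0∞} (hC' : C' ≠ ⊤) {x K : ℝ} (hK : 1 ≤ K)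
    (h : ENNReal.ofReal x ≤ C' * ENNReal.ofReal K) : x ≤ C'.toReal * K := by
  rw [← ENNReal.ofReal_toReal hC', ← ENNReal.ofReal_mul ENNReal.toReal_nonneg] at h
  exact (ENNReal.ofReal_le_ofReal_iff
    (mul_nonneg ENNReal.toReal_nonneg (by linarith))).mp h

lemma pack_i (hg : GrowthBound μ n C₀) (hf : MeasureTheory.LocallyIntegrable f μ)
    {c2 : ℝ} (hc2 : 0 ≤ c2) (g : CubeOf μ → ℝ) (Q : CubeOf μ)
    (h : ∫ x in Q.set, |f x - g Q| ∂μ ≤ c2 * (μ (Q.dil 2)).toReal) :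
    ∫⁻ x in Q.set, ENNReal.ofReal |f x - g Q| ∂μ ≤ ENNReal.ofReal c2 * μ (Q.dil 2) := by
  rw [lint_eq hg hf Q (g Q), ← ENNReal.ofReal_toReal (dil_lt_top hg Q (by norm_num)).ne,
    ← ENNReal.ofReal_mul hc2]
  exact ENNReal.ofReal_le_ofReal h

lemma pack_ii {c2 x K : ℝ} (hc2 : 0 ≤ c2) (h : x ≤ c2 * K) :
    ENNReal.ofReal x ≤ ENNReal.ofReal c2 * ENNReal.ofReal K := by
  rw [← ENNReal.ofReal_mul hc2]
  exact ENNReal.ofReal_le_ofReal h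

lemma circ_to_rbmo (hg : GrowthBound μ n C₀) (hC₀ : 0 < C₀) (hβ : (2 : ℝ) ^ n < βd)
    (hf : MeasureTheory.LocallyIntegrable f μ) (αQ : CubeOf μ → ℝ)
    (hmin : ∀ (Q : CubeOf μ) (β : ℝ),
      (⨍ x in Q.set, |f x - αQ Q| ∂μ) ≤ ⨍ x in Q.set, |f x - β| ∂μ)
    {C' : ℝ≥0∞} (h : CircBoundWith μ n βd f αQ C') :
    RBMOBoundWith μ n βd f (ENNReal.ofReal (1 + 2 * βd) * C') := by
  have hβ0 : (0 : ℝ) < βd := lt_trans (by positivity) hβ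
  rcases eq_or_ne C' ⊤ with rfl | hC'
  · rw [ENNReal.mul_top (ENNReal.ofReal_pos.mpr (by linarith)).ne']
    exact ⟨fun Q => boundWith_top_i Q _, fun Q R _ _ _ => boundWith_top_ii Q R _⟩
  set c := C'.toReal with hcdef
  have hc0 : 0 ≤ c := ENNReal.toReal_nonneg
  have hA := unfold_i hg hf hC' (fun Q => αQ (Q.tilde βd)) h.1
  have hB : ∀ Q R : CubeOf μ, Q.set ⊆ R.set → IsDoubling μ 2 βd Q → IsDoubling μ 2 βd R →
      |αQ Q - αQ R| ≤ c * Kcoef n Q R := fun Q R hs hQ hR =>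
    unfold_ii hC' (Kcoef_ge_one n Q R) (h.2 Q R hs hQ hR)
  have hbr : ∀ P : CubeOf μ, IsDoubling μ 2 βd P → |mQ μ P f - αQ P| ≤ c * βd :=
    bridge hg hf hβ0.le αQ hmin _ hc0 hA
  have hcc : C' = ENNReal.ofReal c := (ENNReal.ofReal_toReal hC').symm
  rw [hcc, ← ENNReal.ofReal_mul (by linarith)]
  refine ⟨fun Q => ?_, fun Q R hs hQ hR => ?_⟩
  · apply pack_i hg hf (by positivity) (fun Q => mQ μ (Q.tilde βd) f) Q
    have t1 := I_triangle hg hf Q (mQ μ (Q.tilde βd) f) (αQ (Q.tilde βd))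
    have t2 : |αQ (Q.tilde βd) - mQ μ (Q.tilde βd) f| ≤ c * βd := by
      rw [abs_sub_comm]; exact hbr _ (tilde_doubling hg hC₀ hβ Q)
    have t3 := hA Q
    have t4 : (μ Q.set).toReal ≤ (μ (Q.dil 2)).toReal :=
      ENNReal.toReal_mono (dil_lt_top hg Q (by norm_num)).ne
        (measure_mono (set_subset_dil2 Q))
    have t5 : (0 : ℝ) ≤ (μ Q.set).toReal := ENNReal.toReal_nonneg
    have p1 : |αQ (Q.tilde βd) - mQ μ (Q.tilde βd) f| * (μ Q.set).toReal
        ≤ (c * βd) * (μ Q.set).toReal := mul_le_mul_of_nonneg_right t2 t5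
    have p2 : (c * βd) * (μ Q.set).toReal ≤ (c * βd) * (μ (Q.dil 2)).toReal :=
      mul_le_mul_of_nonneg_left t4 (mul_nonneg hc0 hβ0.le)
    have p3 : 0 ≤ (c * βd) * (μ (Q.dil 2)).toReal :=
      mul_nonneg (mul_nonneg hc0 hβ0.le) ENNReal.toReal_nonneg
    nlinarith
  · apply pack_ii (by positivity)
    have b1 := hbr Q hQ
    have b2 : |αQ R - mQ μ R f| ≤ c * βd := by rw [abs_sub_comm]; exact hbr R hR
    have b3 := hB Q R hs hQ hR
    have hK := Kcoef_ge_one n Q R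
    have habs : |mQ μ Q f - mQ μ R f| ≤
        |mQ μ Q f - αQ Q| + |αQ Q - αQ R| + |αQ R - mQ μ R f| := by
      calc |mQ μ Q f - mQ μ R f| ≤ |mQ μ Q f - αQ R| + |αQ R - mQ μ R f| :=
            abs_sub_le _ _ _
        _ ≤ (|mQ μ Q f - αQ Q| + |αQ Q - αQ R|) + |αQ R - mQ μ R f| := by
            have := abs_sub_le (mQ μ Q f) (αQ Q) (αQ R); linarith
    nlinarith [mul_nonneg (mul_nonneg hc0 hβ0.le) (by linarith : (0:ℝ) ≤ Kcoef n Q R - 1)]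

lemma rbmo_to_circ (hg : GrowthBound μ n C₀) (hC₀ : 0 < C₀) (hβ : (2 : ℝ) ^ n < βd)
    (hf : MeasureTheory.LocallyIntegrable f μ) (αQ : CubeOf μ → ℝ)
    (hmin : ∀ (Q : CubeOf μ) (β : ℝ),
      (⨍ x in Q.set, |f x - αQ Q| ∂μ) ≤ ⨍ x in Q.set, |f x - β| ∂μ)
    {C' : ℝ≥0∞} (h : RBMOBoundWith μ n βd f C') :
    CircBoundWith μ n βd f αQ (ENNReal.ofReal (1 + 2 * βd) * C') := by
  have hβ0 : (0 : ℝ) < βd := lt_trans (by positivity) hβ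
  rcases eq_or_ne C' ⊤ with rfl | hC'
  · rw [ENNReal.mul_top (ENNReal.ofReal_pos.mpr (by linarith)).ne']
    exact ⟨fun Q => boundWith_top_i Q _, fun Q R _ _ _ => boundWith_top_ii Q R _⟩
  set c := C'.toReal with hcdef
  have hc0 : 0 ≤ c := ENNReal.toReal_nonneg
  have hA := unfold_i hg hf hC' (fun Q => mQ μ (Q.tilde βd) f) h.1
  have hB : ∀ Q R : CubeOf μ, Q.set ⊆ R.set → IsDoubling μ 2 βd Q → IsDoubling μ 2 βd R →
      |mQ μ Q f - mQ μ R f| ≤ c * Kcoef n Q R := fun Q R hs hQ hR =>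
    unfold_ii hC' (Kcoef_ge_one n Q R) (h.2 Q R hs hQ hR)
  have hbr : ∀ P : CubeOf μ, IsDoubling μ 2 βd P → |mQ μ P f - αQ P| ≤ c * βd :=
    bridge hg hf hβ0.le αQ hmin (fun P => mQ μ P f) hc0 hA
  have hcc : C' = ENNReal.ofReal c := (ENNReal.ofReal_toReal hC').symm
  rw [hcc, ← ENNReal.ofReal_mul (by linarith)]
  refine ⟨fun Q => ?_, fun Q R hs hQ hR => ?_⟩
  · apply pack_i hg hf (by positivity) (fun Q => αQ (Q.tilde βd)) Q
    have t1 := I_triangle hg hf Q (αQ (Q.tilde βd)) (mQ μ (Q.tilde βd) f)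
    have t2 : |mQ μ (Q.tilde βd) f - αQ (Q.tilde βd)| ≤ c * βd :=
      hbr _ (tilde_doubling hg hC₀ hβ Q)
    have t3 := hA Q
    have t4 : (μ Q.set).toReal ≤ (μ (Q.dil 2)).toReal :=
      ENNReal.toReal_mono (dil_lt_top hg Q (by norm_num)).ne
        (measure_mono (set_subset_dil2 Q))
    have t5 : (0 : ℝ) ≤ (μ Q.set).toReal := ENNReal.toReal_nonneg
    have p1 : |mQ μ (Q.tilde βd) f - αQ (Q.tilde βd)| * (μ Q.set).toReal
        ≤ (c * βd) * (μ Q.set).toReal := mul_le_mul_of_nonneg_right t2 t5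
    have p2 : (c * βd) * (μ Q.set).toReal ≤ (c * βd) * (μ (Q.dil 2)).toReal :=
      mul_le_mul_of_nonneg_left t4 (mul_nonneg hc0 hβ0.le)
    have p3 : 0 ≤ (c * βd) * (μ (Q.dil 2)).toReal :=
      mul_nonneg (mul_nonneg hc0 hβ0.le) ENNReal.toReal_nonneg
    nlinarith
  · apply pack_ii (by positivity)
    have b1 : |αQ Q - mQ μ Q f| ≤ c * βd := by rw [abs_sub_comm]; exact hbr Q hQ
    have b2 := hbr R hR
    have b3 := hB Q R hs hQ hR
    have hK := Kcoef_ge_one n Q R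
    have habs : |αQ Q - αQ R| ≤
        |αQ Q - mQ μ Q f| + |mQ μ Q f - mQ μ R f| + |mQ μ R f - αQ R| := by
      calc |αQ Q - αQ R| ≤ |αQ Q - mQ μ R f| + |mQ μ R f - αQ R| := abs_sub_le _ _ _
        _ ≤ (|αQ Q - mQ μ Q f| + |mQ μ Q f - mQ μ R f|) + |mQ μ R f - αQ R| := by
            have := abs_sub_le (αQ Q) (mQ μ Q f) (mQ μ R f); linarith
    nlinarith [mul_nonneg (mul_nonneg hc0 hβ0.le) (by linarith : (0:ℝ) ≤ Kcoef n Q R - 1)]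

end Statement10Aux

/-- Lemma 5.4: `‖·‖_∘` is equivalent to `‖·‖_*`, for any admissible choice of the
minimizers `α_Q(f)`. -/
theorem statement10 (d n : ℕ) (hn : 1 ≤ n) (hnd : n ≤ d) (C₀ βd : ℝ)
    (hC₀ : 0 < C₀) (hβ : (2 : ℝ) ^ n < βd) :
    ∃ C : ℝ, 1 ≤ C ∧ ∀ μ : MeasureTheory.Measure (Euc d), GrowthBound μ n C₀ →
      SmallDoublingAE μ βd →
      ∀ f : Euc d → ℝ, MeasureTheory.LocallyIntegrable f μ →
      ∀ αQ : CubeOf μ → ℝ,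
        (∀ (Q : CubeOf μ) (β : ℝ),
          (⨍ x in Q.set, |f x - αQ Q| ∂μ) ≤ ⨍ x in Q.set, |f x - β| ∂μ) →
        rbmoNorm μ n βd f ≤ ENNReal.ofReal C * circNorm μ n βd f αQ ∧
        circNorm μ n βd f αQ ≤ ENNReal.ofReal C * rbmoNorm μ n βd f := by
  have h2n : (0 : ℝ) < 2 ^ n := by positivity
  refine ⟨1 + 2 * βd, by linarith, ?_⟩
  intro μ hg _hsd f hf αQ hmin
  have hne0 : ENNReal.ofReal (1 + 2 * βd) ≠ 0 :=
    (ENNReal.ofReal_pos.mpr (by linarith)).ne'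
  constructor
  · exact Statement10Aux.sInf_le_mul_sInf hne0 ENNReal.ofReal_ne_top
      (fun b hb => Statement10Aux.circ_to_rbmo hg hC₀ hβ hf αQ hmin hb)
  · exact Statement10Aux.sInf_le_mul_sInf hne0 ENNReal.ofReal_ne_top
      (fun b hb => Statement10Aux.rbmo_to_circ hg hC₀ hβ hf αQ hmin hb)
end
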